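/- arXiv:1901.03007 — 10 statements merged into one kernel-verified Lean document; each statement's English description precedes it below -/
import Mathlib

section
/- If K : (0,∞) → ℝ is locally integrable, eventually decreasing, tends to 0 at infinity, and satisfies t·K(t) → C₁ > 0 as t → ∞, then the improper integral K_sin(ω) = ∫₀^∞ K(t) sin(ωt) dt converges to C₁·π/2 as ω → 0⁺. -/
/-!
Substituting `u = ω t`, the hypothesis `t K(t) ≈ C₁` becomes
`K(t) sin(ω t) ≈ C₁ ω sinc(ω t)`, so over `[c, B / ω]` the integral is `C₁ ∫_{ωc}^{B} sinc` up
to a small error, and `∫_0^B sinc → π / 2` (Dirichlet). The piece over `[0, c]` is `O(ω)`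
because `|sin(ω t)| ≤ ω t`. On the tail `[B / ω, ∞)` the eventually decreasing `K` meets a
sign-alternating sine: pairing `t` with `t + π / ω` leaves only boundary terms, so the tail is
`O(K(B / ω) / ω) = O(1 / B)`. Dirichlet's integral itself follows from
`∫_0^{π/2} sin((2n+1)t) / sin t = π / 2` and the Riemann–Lebesgue lemma for `1 / t - 1 / sin t`.
-/

open MeasureTheory Filter Set Real Topology

section IntegralMulSin

variable {f : ℝ → ℝ} {a b p ω : ℝ}

theorem MeasureTheory.IntegrableOn.intervalIntegrable_of_mem_Icc {c d : ℝ}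
    (hf : IntegrableOn f (Icc a b)) (hc : c ∈ Icc a b) (hd : d ∈ Icc a b) :
    IntervalIntegrable f volume c d :=
  (hf.mono_set (uIcc_subset_Icc hc hd)).intervalIntegrable

theorem MeasureTheory.IntegrableOn.intervalIntegrable_comp_add (hf : IntegrableOn f (Icc a b))
    (hp : 0 ≤ p) (hab : a + p ≤ b) :
    IntervalIntegrable (fun t => f (t + p)) volume a (b - p) := by
  have hap : a + p ∈ Icc a b := ⟨by linarith, hab⟩
  simpa using
    (hf.intervalIntegrable_of_mem_Icc hap (right_mem_Icc.2 (by linarith))).comp_add_right p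

theorem intervalIntegral_sub_comp_add (hp : 0 ≤ p) (hab : a + p ≤ b)
    (hf : IntegrableOn f (Icc a b)) :
    ∫ t in a..(b - p), (f t - f (t + p))
      = (∫ t in a..(a + p), f t) - ∫ t in (b - p)..b, f t := by
  have ha : a ∈ Icc a b := left_mem_Icc.2 (by linarith)
  have hbp : b - p ∈ Icc a b := ⟨by linarith, by linarith⟩
  have hleft := hf.intervalIntegrable_of_mem_Icc ha hbp
  rw [intervalIntegral.integral_sub hleft (hf.intervalIntegrable_comp_add hp hab),
    intervalIntegral.integral_comp_add_right, sub_add_cancel,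
    intervalIntegral.integral_interval_sub_interval_comm hleft
      (hf.intervalIntegrable_of_mem_Icc ⟨by linarith, hab⟩ (right_mem_Icc.2 (by linarith)))
      (hf.intervalIntegrable_of_mem_Icc ha ⟨by linarith, hab⟩)]

theorem abs_intervalIntegral_mul_sin_le_mul_sub {M : ℝ} (hab : a ≤ b)
    (hf : ∀ t ∈ Ioc a b, |f t| ≤ M) :
    |∫ t in a..b, f t * sin (ω * t)| ≤ M * (b - a) := by
  have := intervalIntegral.norm_integral_le_of_norm_le_const (C := M)
    (f := fun t => f t * sin (ω * t)) (a := a) (b := b) fun t ht => by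
      rw [uIoc_of_le hab] at ht
      rw [norm_mul]
      exact (mul_le_of_le_one_right (norm_nonneg _) (abs_sin_le_one _)).trans (hf t ht)
  rwa [abs_of_nonneg (sub_nonneg.2 hab)] at this

theorem abs_intervalIntegral_sub_comp_add_mul_sin_le (hp : 0 ≤ p) (hab : a + p ≤ b)
    (hf : AntitoneOn f (Icc a b)) (hfb : 0 ≤ f b) :
    |∫ t in a..(b - p), (f t - f (t + p)) * sin (ω * t)| ≤ p * f a := by
  have hint : IntegrableOn f (Icc a b) := hf.integrableOn_isCompact isCompact_Icc
  have ha : a ∈ Icc a b := left_mem_Icc.2 (by linarith)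
  have hdiff : IntervalIntegrable (fun t => f t - f (t + p)) volume a (b - p) :=
    (hint.intervalIntegrable_of_mem_Icc ha ⟨by linarith, by linarith⟩).sub
      (hint.intervalIntegrable_comp_add hp hab)
  have hmono : ∀ t ∈ Icc a (b - p), |(f t - f (t + p)) * sin (ω * t)| ≤ f t - f (t + p) :=
    fun t ht => by
      have hft : 0 ≤ f t - f (t + p) := sub_nonneg.2 <|
        hf ⟨ht.1, by linarith [ht.2]⟩ ⟨by linarith [ht.1], by linarith [ht.2]⟩ (by linarith)
      rw [abs_mul, abs_of_nonneg hft]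
      exact mul_le_of_le_one_right hft (abs_sin_le_one _)
  calc _ ≤ ∫ t in a..(b - p), (f t - f (t + p)) :=
        (intervalIntegral.abs_integral_le_integral_abs (by linarith)).trans
          (intervalIntegral.integral_mono_on (by linarith)
            (hdiff.mul_continuousOn (by fun_prop)).abs hdiff hmono)
    _ = (∫ t in a..(a + p), f t) - ∫ t in (b - p)..b, f t :=
        intervalIntegral_sub_comp_add hp hab hint
    _ ≤ ∫ t in a..(a + p), f a := by
      refine (sub_le_self _ <| intervalIntegral.integral_nonneg (by linarith) fun t ht =>
        hfb.trans (hf ⟨by linarith [ht.1], ht.2⟩ ⟨by linarith, le_rfl⟩ ht.2)).trans ?_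
      exact intervalIntegral.integral_mono_on (by linarith)
        (hint.intervalIntegrable_of_mem_Icc ha ⟨by linarith, hab⟩) intervalIntegrable_const
        fun t ht => hf ha ⟨ht.1, by linarith [ht.2]⟩ ht.1
    _ = p * f a := by simp

theorem two_mul_intervalIntegral_mul_sin (hω : 0 < ω) (hab : a + π / ω ≤ b)
    (hf : IntegrableOn f (Icc a b)) :
    2 * ∫ t in a..b, f t * sin (ω * t)
      = (∫ t in a..(b - π / ω), (f t - f (t + π / ω)) * sin (ω * t))
        + (∫ t in (b - π / ω)..b, f t * sin (ω * t))
        + ∫ t in a..(a + π / ω), f t * sin (ω * t) := by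
  set p := π / ω with hp_def
  have hp : 0 < p := div_pos pi_pos hω
  have hsub : ∀ c ∈ Icc a b, ∀ d ∈ Icc a b,
      IntervalIntegrable (fun t => f t * sin (ω * t)) volume c d := fun c hc d hd =>
    (hf.intervalIntegrable_of_mem_Icc hc hd).mul_continuousOn (by fun_prop)
  have hshift : ∫ t in a..(b - p), f (t + p) * sin (ω * t)
      = -∫ t in (a + p)..b, f t * sin (ω * t) := by
    have hsin : ∀ t, sin (ω * (t + p)) = -sin (ω * t) := fun t => by
      rw [mul_add, hp_def, mul_div_cancel₀ _ hω.ne', sin_add_pi]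
    rw [← sub_add_cancel b p, ← intervalIntegral.integral_comp_add_right,
      ← intervalIntegral.integral_neg, add_sub_cancel_right]
    simp only [hsin, mul_neg, neg_neg]
  have ha : a ∈ Icc a b := left_mem_Icc.2 (by linarith)
  have hb : b ∈ Icc a b := right_mem_Icc.2 (by linarith)
  have hbp : b - p ∈ Icc a b := ⟨by linarith, by linarith⟩
  have hap : a + p ∈ Icc a b := ⟨by linarith, hab⟩
  have h1 := intervalIntegral.integral_add_adjacent_intervals (hsub a ha _ hbp) (hsub _ hbp b hb)
  have h2 := intervalIntegral.integral_add_adjacent_intervals (hsub a ha _ hap) (hsub _ hap b hb)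
  have h3 : ∫ t in a..(b - p), (f t - f (t + p)) * sin (ω * t)
      = (∫ t in a..(b - p), f t * sin (ω * t))
        - ∫ t in a..(b - p), f (t + p) * sin (ω * t) := by
    simp only [sub_mul]
    exact intervalIntegral.integral_sub (hsub a ha _ hbp)
      ((hf.intervalIntegrable_comp_add hp.le hab).mul_continuousOn (by fun_prop))
  rw [h3, hshift]
  linarith

theorem abs_intervalIntegral_mul_sin_le_of_antitoneOn (hω : 0 < ω) (hab : a ≤ b)
    (hf : AntitoneOn f (Icc a b)) (hfb : 0 ≤ f b) :
    |∫ t in a..b, f t * sin (ω * t)| ≤ 3 * π / (2 * ω) * f a := by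
  have hp : 0 < π / ω := div_pos pi_pos hω
  have ha : a ∈ Icc a b := left_mem_Icc.2 hab
  have hbd : ∀ t ∈ Icc a b, |f t| ≤ f a := fun t ht =>
    abs_le.2 ⟨by linarith [hfb.trans (hf ht (right_mem_Icc.2 hab) ht.2), hf ha ht ht.1],
      hf ha ht ht.1⟩
  have hcrude : ∀ c d, a ≤ c → c ≤ d → d ≤ b →
      |∫ t in c..d, f t * sin (ω * t)| ≤ f a * (d - c) := fun c d hc hcd hd =>
    abs_intervalIntegral_mul_sin_le_mul_sub hcd fun t ht =>
      hbd t ⟨hc.trans ht.1.le, ht.2.trans hd⟩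
  rw [show 3 * π / (2 * ω) * f a = 3 / 2 * (π / ω * f a) by field_simp]
  rcases le_or_gt b (a + π / ω) with hbp | hbp
  · nlinarith [hcrude a b le_rfl hab le_rfl, (abs_nonneg _).trans (hbd a ha)]
  have h1 := abs_intervalIntegral_sub_comp_add_mul_sin_le (ω := ω) hp.le hbp.le hf hfb
  have h2 := hcrude (b - π / ω) b (by linarith) (by linarith) le_rfl
  have h3 := hcrude a (a + π / ω) le_rfl (by linarith) hbp.le
  have htwo := congrArg abs <|
    two_mul_intervalIntegral_mul_sin hω hbp.le (hf.integrableOn_isCompact isCompact_Icc)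
  rw [abs_mul, abs_two] at htwo
  have := abs_add_three (∫ t in a..(b - π / ω), (f t - f (t + π / ω)) * sin (ω * t))
    (∫ t in (b - π / ω)..b, f t * sin (ω * t)) (∫ t in a..(a + π / ω), f t * sin (ω * t))
  linarith

end IntegralMulSin

theorem sin_odd_mul_div_sin (n : ℕ) {t : ℝ} (ht : sin t ≠ 0) :
    sin ((2 * n + 1) * t) / sin t = 1 + 2 * ∑ k ∈ Finset.range n, cos (2 * (k + 1) * t) := by
  induction n with
  | zero => simp [div_self ht]
  | succ n ih =>
    have hstep : sin ((2 * (n + 1 : ℕ) + 1) * t) - sin ((2 * n + 1) * t)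
        = 2 * cos (2 * (n + 1) * t) * sin t := by
      rw [sin_sub_sin]; push_cast; ring_nf
    rw [Finset.sum_range_succ, mul_add, ← add_assoc, ← ih, ← sub_eq_iff_eq_add', ← sub_div,
      hstep]
    field_simp

theorem integral_sin_odd_mul_div_sin (n : ℕ) :
    ∫ t in (0 : ℝ)..(π / 2), sin ((2 * n + 1) * t) / sin t = π / 2 := by
  have hae : ∀ᵐ t, t ∈ uIoc 0 (π / 2) → sin ((2 * n + 1) * t) / sin t
      = 1 + 2 * ∑ k ∈ Finset.range n, cos (2 * (k + 1) * t) := by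
    refine ae_of_all _ fun t ht => sin_odd_mul_div_sin n ?_
    rw [uIoc_of_le (by positivity)] at ht
    exact (sin_pos_of_pos_of_lt_pi ht.1 (by linarith [ht.2, pi_pos])).ne'
  have hcos : ∀ k : ℕ, ∫ t in (0 : ℝ)..(π / 2), cos (2 * (k + 1) * t) = 0 := fun k => by
    rw [intervalIntegral.integral_comp_mul_left _ (by positivity), integral_cos,
      show 2 * (k + 1) * (π / 2) = ((k + 1 : ℕ) : ℝ) * π by push_cast; ring, sin_nat_mul_pi]
    simp
  rw [intervalIntegral.integral_congr_ae hae,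
    intervalIntegral.integral_add intervalIntegrable_const (Continuous.intervalIntegrable
      (by fun_prop) _ _), intervalIntegral.integral_const_mul,
    intervalIntegral.integral_finsetSum fun k _ => Continuous.intervalIntegrable (by fun_prop) _ _]
  simp [hcos]

theorem abs_inv_sub_inv_sin_le_one {t : ℝ} (ht₀ : 0 < t) (ht : t ≤ π / 2) :
    |t⁻¹ - (sin t)⁻¹| ≤ 1 := by
  have hsin : 2 / π * t ≤ sin t := mul_le_sin ht₀.le ht
  have hsin₀ : 0 < sin t := lt_of_lt_of_le (by positivity) hsin
  rw [abs_sub_comm, abs_of_nonneg (sub_nonneg.2 (inv_anti₀ hsin₀ (sin_le ht₀.le))),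
    inv_sub_inv hsin₀.ne' ht₀.ne', div_le_one (by positivity)]
  have hcube : t - sin t ≤ t ^ 3 / 6 := by linarith [sin_ge_sub_cube ht₀.le]
  have hcube' : t ^ 3 / 6 ≤ 2 / π * t * t := by
    rw [div_mul_eq_mul_div, div_mul_eq_mul_div, le_div_iff₀ pi_pos]
    have hπt : π * t ≤ 12 := by nlinarith [pi_le_four, pi_pos]
    nlinarith [mul_le_mul_of_nonneg_left hπt (sq_nonneg t)]
  nlinarith [mul_le_mul_of_nonneg_right hsin ht₀.le]

theorem intervalIntegrable_inv_sub_inv_sin :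
    IntervalIntegrable (fun t => t⁻¹ - (sin t)⁻¹) volume 0 (π / 2) := by
  rw [intervalIntegrable_iff_integrableOn_Ioc_of_le (by positivity)]
  exact Measure.integrableOn_of_bounded (M := 1) measure_Ioc_lt_top.ne (by fun_prop)
    ((ae_restrict_iff' measurableSet_Ioc).2 (ae_of_all _ fun t ht =>
      abs_inv_sub_inv_sin_le_one ht.1 ht.2))

theorem tendsto_integral_mul_sin_atTop {g : ℝ → ℝ} (hg : Integrable g) :
    Tendsto (fun c => ∫ v, g v * sin (c * v)) atTop (𝓝 0) := by
  have hcocompact : Tendsto (fun c : ℝ => -(c / (2 * π))) atTop (cocompact ℝ) := by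
    rw [cocompact_eq_atBot_atTop]
    exact (tendsto_neg_atTop_atBot.comp (tendsto_id.atTop_div_const (by positivity))).mono_right
      le_sup_left
  have him : ∀ c : ℝ, (∫ v, fourierChar (-(v * -(c / (2 * π)))) • (g v : ℂ)).im
      = ∫ v, g v * sin (c * v) := fun c => by
    rw [← Complex.imCLM_apply, ← ContinuousLinearMap.integral_comp_comm]
    · congr 1 with v
      rw [Complex.imCLM_apply, Circle.smul_def, Real.fourierChar_apply, smul_eq_mul,
        Complex.mul_im, Complex.ofReal_im, Complex.ofReal_re, Complex.exp_ofReal_mul_I_im]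
      field_simp
      ring_nf
    · simpa [mul_comm] using
        (Real.fourierIntegral_convergent_iff (μ := volume) (-(c / (2 * π)))).2 hg.ofReal
  exact ((Complex.continuous_im.tendsto 0).comp
    ((Real.tendsto_integral_exp_smul_cocompact fun v => (g v : ℂ)).comp hcocompact)).congr him

theorem tendsto_intervalIntegral_mul_sin_atTop {g : ℝ → ℝ} {a b : ℝ} (hab : a ≤ b)
    (hg : IntervalIntegrable g volume a b) :
    Tendsto (fun c => ∫ t in a..b, g t * sin (c * t)) atTop (𝓝 0) := by
  refine (tendsto_integral_mul_sin_atTop (((intervalIntegrable_iff_integrableOn_Ioc_of_le hab).1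
    hg).integrable_indicator measurableSet_Ioc)).congr fun c => ?_
  rw [intervalIntegral.integral_of_le hab, ← integral_indicator measurableSet_Ioc]
  exact integral_congr_ae <|
    ae_of_all _ fun v => (indicator_mul_left _ g fun t => sin (c * t)).symm

theorem integral_sinc_odd_mul_pi_div_two (n : ℕ) :
    ∫ u in (0 : ℝ)..((2 * n + 1) * (π / 2)), sinc u
      = π / 2 + ∫ t in (0 : ℝ)..(π / 2), (t⁻¹ - (sin t)⁻¹) * sin ((2 * n + 1) * t) := by
  set N : ℝ := 2 * n + 1
  have hscale : ∫ u in (0 : ℝ)..(N * (π / 2)), sinc u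
      = ∫ t in (0 : ℝ)..(π / 2), N * sinc (N * t) := by
    rw [intervalIntegral.integral_const_mul, intervalIntegral.mul_integral_comp_mul_left,
      mul_zero]
  have hae : ∀ᵐ t, t ∈ uIoc 0 (π / 2) →
      N * sinc (N * t) - (t⁻¹ - (sin t)⁻¹) * sin (N * t) = sin (N * t) / sin t := by
    refine ae_of_all _ fun t ht => ?_
    rw [uIoc_of_le (by positivity)] at ht
    have hN : N ≠ 0 := by positivity
    rw [sinc_of_ne_zero (mul_ne_zero hN ht.1.ne')]
    field_simp
    ring
  have hD := integral_sin_odd_mul_div_sin n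
  rw [← intervalIntegral.integral_congr_ae hae,
    intervalIntegral.integral_sub (Continuous.intervalIntegrable (by fun_prop) _ _)
      (intervalIntegrable_inv_sub_inv_sin.mul_continuousOn (by fun_prop))] at hD
  rw [hscale]
  linarith

theorem tendsto_integral_sinc_odd_mul_pi_div_two :
    Tendsto (fun n : ℕ => ∫ u in (0 : ℝ)..((2 * n + 1) * (π / 2)), sinc u) atTop
      (𝓝 (π / 2)) := by
  have hodd : Tendsto (fun n : ℕ => 2 * (n : ℝ) + 1) atTop atTop :=
    tendsto_atTop_add_const_right _ _ (tendsto_natCast_atTop_atTop.const_mul_atTop two_pos)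
  simp_rw [integral_sinc_odd_mul_pi_div_two]
  simpa using ((tendsto_intervalIntegral_mul_sin_atTop (by positivity)
    intervalIntegrable_inv_sub_inv_sin).comp hodd).const_add (π / 2)

theorem abs_intervalIntegral_sinc_le {a b : ℝ} (ha : 0 < a) (hab : a ≤ b) :
    |∫ u in a..b, sinc u| ≤ 3 * π / (2 * a) := by
  have hae : ∀ᵐ u, u ∈ uIoc a b → sinc u = u⁻¹ * sin (1 * u) := by
    refine ae_of_all _ fun u hu => ?_
    rw [uIoc_of_le hab] at hu
    rw [sinc_of_ne_zero (ha.trans hu.1).ne', one_mul, div_eq_inv_mul]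
  rw [intervalIntegral.integral_congr_ae hae]
  refine (abs_intervalIntegral_mul_sin_le_of_antitoneOn one_pos hab
    (fun x hx y _ hxy => inv_anti₀ (ha.trans_le hx.1) hxy)
    (inv_nonneg.2 (ha.le.trans hab))).trans_eq ?_
  field_simp

theorem tendsto_integral_sinc_atTop :
    Tendsto (fun B => ∫ u in (0 : ℝ)..B, sinc u) atTop (𝓝 (π / 2)) := by
  rw [Metric.tendsto_atTop]
  intro ε hε
  have hodd : Tendsto (fun n : ℕ => (2 * n + 1) * (π / 2)) atTop atTop :=
    (tendsto_atTop_add_const_right _ _ (tendsto_natCast_atTop_atTop.const_mul_atTop two_pos)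
      ).atTop_mul_const (by positivity)
  obtain ⟨n, hn, hnB⟩ := ((Metric.tendsto_nhds.1 tendsto_integral_sinc_odd_mul_pi_div_two
    (ε / 2) (half_pos hε)).and (hodd.eventually_gt_atTop (3 * π / ε))).exists
  set B₀ := (2 * n + 1) * (π / 2 : ℝ)
  refine ⟨B₀, fun B hB => ?_⟩
  have htail := abs_intervalIntegral_sinc_le (by positivity) hB
  rw [← intervalIntegral.integral_interval_sub_left (a := 0)
    (continuous_sinc.intervalIntegrable _ _) (continuous_sinc.intervalIntegrable _ _)] at htail
  have hsmall : 3 * π / (2 * B₀) < ε / 2 := by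
    rw [div_lt_iff₀ hε] at hnB
    rw [div_lt_div_iff₀ (by positivity) two_pos]
    linarith
  rw [dist_eq] at hn ⊢
  linarith [abs_sub_le (∫ u in (0 : ℝ)..B, sinc u) (∫ u in (0 : ℝ)..B₀, sinc u) (π / 2)]

theorem abs_integral_sinc_le (x : ℝ) : |∫ u in (0 : ℝ)..x, sinc u| ≤ |x| := by
  simpa using intervalIntegral.norm_integral_le_of_norm_le_const (a := 0) (b := x)
    fun u _ => (norm_eq_abs (sinc u)).trans_le (abs_sinc_le_one u)

theorem mul_sin_mul_eq_mul_sinc (x ω t : ℝ) :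
    x * sin (ω * t) = ω * (t * x) * sinc (ω * t) := by
  rcases eq_or_ne (ω * t) 0 with h | h
  · rcases mul_eq_zero.1 h with rfl | rfl <;> simp
  · rw [sinc_of_ne_zero h, mul_div_assoc', eq_div_iff h]
    ring

section Kernel

variable {K : ℝ → ℝ} {C η c a ω : ℝ}

theorem abs_intervalIntegral_mul_sin_le_mul_integral_abs (hω : 0 ≤ ω) (hc : 0 ≤ c)
    (hK : IntervalIntegrable K volume 0 c) :
    |∫ t in (0 : ℝ)..c, K t * sin (ω * t)| ≤ ω * c * ∫ t in (0 : ℝ)..c, |K t| := by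
  rw [← intervalIntegral.integral_const_mul]
  refine (intervalIntegral.abs_integral_le_integral_abs hc).trans <|
    intervalIntegral.integral_mono_on hc (hK.mul_continuousOn (by fun_prop)).abs
      (hK.abs.const_mul _) fun t ht => ?_
  rw [abs_mul, mul_comm]
  gcongr
  calc |sin (ω * t)| ≤ |ω * t| := abs_sin_le_abs
    _ ≤ ω * c := by rw [abs_of_nonneg (mul_nonneg hω ht.1)]; gcongr; exact ht.2

theorem abs_intervalIntegral_mul_sin_sub_integral_sinc_le (hω : 0 ≤ ω) (hca : c ≤ a)
    (hK : IntervalIntegrable K volume c a) (hη : ∀ t ∈ Icc c a, |t * K t - C| ≤ η) :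
    |(∫ t in c..a, K t * sin (ω * t)) - C * ∫ u in (ω * c)..(ω * a), sinc u|
      ≤ ω * η * (a - c) := by
  have hsinc : C * ∫ u in (ω * c)..(ω * a), sinc u = ∫ t in c..a, ω * C * sinc (ω * t) := by
    rw [← intervalIntegral.mul_integral_comp_mul_left, ← intervalIntegral.integral_const_mul,
      ← intervalIntegral.integral_const_mul]
    simp only [mul_left_comm, mul_assoc]
  rw [hsinc, ← intervalIntegral.integral_sub (hK.mul_continuousOn (by fun_prop))
    (Continuous.intervalIntegrable (by fun_prop) _ _)]
  have := intervalIntegral.norm_integral_le_of_norm_le_const (C := ω * η)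
    (f := fun t => K t * sin (ω * t) - ω * C * sinc (ω * t)) (a := c) (b := a) fun t ht => by
      rw [uIoc_of_le hca] at ht
      rw [mul_sin_mul_eq_mul_sinc, ← sub_mul, ← mul_sub, norm_mul, norm_mul, norm_of_nonneg hω]
      exact (mul_le_of_le_one_right (by positivity) (abs_sinc_le_one _)).trans
        (mul_le_mul_of_nonneg_left (hη t ⟨ht.1.le, ht.2⟩) hω)
  rwa [abs_of_nonneg (sub_nonneg.2 hca)] at this

theorem abs_intervalIntegral_mul_sin_le_of_mul_le {T L : ℝ} (hω : 0 < ω) (ha : 0 < a)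
    (haT : a ≤ T) (hK : AntitoneOn K (Icc a T)) (hKT : 0 ≤ K T) (haK : a * K a ≤ L) :
    |∫ t in a..T, K t * sin (ω * t)| ≤ 3 * π * L / (2 * (ω * a)) :=
  calc _ ≤ 3 * π / (2 * ω) * K a := abs_intervalIntegral_mul_sin_le_of_antitoneOn hω haT hK hKT
    _ = 3 * π * (a * K a) / (2 * (ω * a)) := by field_simp
    _ ≤ 3 * π * L / (2 * (ω * a)) := by gcongr

theorem abs_intervalIntegral_mul_sin_sub_le {B T : ℝ} (hc : 0 < c) (hω : 0 < ω)
    (hcB : ω * c ≤ B) (hBT : B ≤ ω * T) (hK : IntegrableOn K (Icc 0 T))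
    (hanti : AntitoneOn K (Ici c)) (hKT : 0 ≤ K T) (hη : ∀ t ≥ c, |t * K t - C| ≤ η) :
    |(∫ t in (0 : ℝ)..T, K t * sin (ω * t)) - C * π / 2|
      ≤ ω * c * ((∫ t in (0 : ℝ)..c, |K t|) + |C|) + η * B
        + |C| * |(∫ u in (0 : ℝ)..B, sinc u) - π / 2| + 3 * π * (C + η) / (2 * B) := by
  set a := B / ω
  have haω : ω * a = B := mul_div_cancel₀ _ hω.ne'
  have hca : c ≤ a := by rw [le_div_iff₀ hω]; linarith
  have haT : a ≤ T := by rw [div_le_iff₀ hω]; linarith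
  have h0 : (0 : ℝ) ∈ Icc 0 T := ⟨le_rfl, by linarith⟩
  have hc0 : c ∈ Icc 0 T := ⟨hc.le, by linarith⟩
  have ha0 : a ∈ Icc 0 T := ⟨by linarith, haT⟩
  have hT0 : T ∈ Icc 0 T := ⟨by linarith, le_rfl⟩
  have hKsin : ∀ x ∈ Icc 0 T, ∀ y ∈ Icc 0 T,
      IntervalIntegrable (fun t => K t * sin (ω * t)) volume x y := fun x hx y hy =>
    (hK.intervalIntegrable_of_mem_Icc hx hy).mul_continuousOn (by fun_prop)
  rw [← intervalIntegral.integral_add_adjacent_intervals (hKsin 0 h0 a ha0) (hKsin a ha0 T hT0),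
    ← intervalIntegral.integral_add_adjacent_intervals (hKsin 0 h0 c hc0) (hKsin c hc0 a ha0)]
  have hnear := abs_intervalIntegral_mul_sin_le_mul_integral_abs hω.le hc.le
    (hK.intervalIntegrable_of_mem_Icc h0 hc0)
  have hmid := abs_intervalIntegral_mul_sin_sub_integral_sinc_le (C := C) hω.le hca
    (hK.intervalIntegrable_of_mem_Icc hc0 ha0) fun t ht => hη t ht.1
  have htail := abs_intervalIntegral_mul_sin_le_of_mul_le (L := C + η) hω (by linarith) haT
    (hanti.mono fun t ht => hca.trans ht.1) hKT (by linarith [(abs_le.1 (hη a hca)).2])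
  rw [haω, ← intervalIntegral.integral_interval_sub_left (a := 0)
    (continuous_sinc.intervalIntegrable _ _) (continuous_sinc.intervalIntegrable _ _)] at hmid
  rw [haω] at htail
  have hS := (abs_mul C _).trans_le <| mul_le_mul_of_nonneg_left
    ((abs_integral_sinc_le (ω * c)).trans_eq (abs_of_nonneg (by positivity))) (abs_nonneg C)
  have hD := (abs_mul C ((∫ u in (0 : ℝ)..B, sinc u) - π / 2)).le
  have hηB : ω * η * (a - c) ≤ η * B := by
    have hη0 : 0 ≤ η := (abs_nonneg _).trans (hη c le_rfl)
    rw [← haω]; nlinarith [mul_nonneg hη0 (mul_nonneg hω.le hc.le)]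
  rw [abs_le] at hnear hmid htail hS hD ⊢
  constructor <;> linarith [hnear.1, hnear.2, hmid.1, hmid.2, htail.1, htail.2, hS.1, hS.2,
    hD.1, hD.2]

theorem abs_sub_le_of_tendsto_intervalIntegral_mul_sin {B L : ℝ} (hc : 0 < c) (hω : 0 < ω)
    (hcB : ω * c ≤ B) (hK : ∀ T, IntegrableOn K (Icc 0 T)) (hanti : AntitoneOn K (Ici c))
    (hK_nonneg : ∀ t ≥ c, 0 ≤ K t) (hη : ∀ t ≥ c, |t * K t - C| ≤ η)
    (hL : Tendsto (fun T => ∫ t in (0 : ℝ)..T, K t * sin (ω * t)) atTop (𝓝 L)) :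
    |L - C * π / 2|
      ≤ ω * c * ((∫ t in (0 : ℝ)..c, |K t|) + |C|) + η * B
        + |C| * |(∫ u in (0 : ℝ)..B, sinc u) - π / 2| + 3 * π * (C + η) / (2 * B) := by
  refine le_of_tendsto (hL.sub_const _).abs (eventually_atTop.2 ⟨B / ω, fun T hT => ?_⟩)
  have hBT : B ≤ ω * T := by rwa [div_le_iff₀' hω] at hT
  exact abs_intervalIntegral_mul_sin_sub_le hc hω hcB hBT (hK T) hanti
    (hK_nonneg T (by nlinarith)) hη

end Kernel

theorem AntitoneOn.nonneg_of_tendsto_atTop {f : ℝ → ℝ} {A t : ℝ} (hf : AntitoneOn f (Ici A))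
    (hlim : Tendsto f atTop (𝓝 0)) (ht : A ≤ t) : 0 ≤ f t :=
  le_of_tendsto hlim (eventually_atTop.2 ⟨t, fun _ hs => hf ht (ht.trans hs) hs⟩)

theorem MeasureTheory.LocallyIntegrableOn.integrableOn_Ioc {f : ℝ → ℝ} {a b : ℝ}
    (hloc : LocallyIntegrableOn f (Ioi a)) (hab : a < b) (hf : IntegrableOn f (Ioc a b))
    (c : ℝ) : IntegrableOn f (Ioc a c) := by
  rcases le_total c b with hcb | hbc
  · exact hf.mono_set (Ioc_subset_Ioc_right hcb)
  · refine (hf.union (hloc.integrableOn_compact_subset (fun x hx => hab.trans_le hx.1)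
      isCompact_Icc : IntegrableOn f (Icc b c))).mono_set fun x hx => ?_
    rcases le_or_gt x b with hxb | hxb
    · exact Or.inl ⟨hx.1, hxb⟩
    · exact Or.inr ⟨hxb.le, hx.2⟩

theorem stmt_0_general (K : ℝ → ℝ) (C₁ : ℝ)
    (hloc : LocallyIntegrableOn K (Ioi 0))
    (hint0 : IntegrableOn K (Ioc 0 1))
    (hdec : ∃ A > (0:ℝ), AntitoneOn K (Ici A))
    (hK0 : Tendsto K atTop (nhds 0))
    (htK : Tendsto (fun t => t * K t) atTop (nhds C₁))
    (Ksin : ℝ → ℝ)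
    (hKsin : ∀ ω > (0:ℝ),
      Tendsto (fun T => ∫ t in (0:ℝ)..T, K t * Real.sin (ω * t)) atTop (nhds (Ksin ω))) :
    Tendsto Ksin (nhdsWithin 0 (Ioi 0)) (nhds (C₁ * π / 2)) := by
  obtain ⟨A, hA, hanti⟩ := hdec
  have hK : ∀ T, IntegrableOn K (Icc 0 T) := fun T =>
    (integrableOn_Icc_iff_integrableOn_Ioc (by simp)).2 (hloc.integrableOn_Ioc one_pos hint0 T)
  rw [Metric.tendsto_nhds]
  intro ε hε
  have hdirichlet : Tendsto (fun B => |C₁| * |(∫ u in (0 : ℝ)..B, sinc u) - π / 2|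
      + 3 * π * (|C₁| + 1) / (2 * B)) atTop (𝓝 0) := by
    simpa using ((tendsto_integral_sinc_atTop.sub_const (π / 2)).abs.const_mul |C₁|).add
      ((tendsto_const_nhds (x := 3 * π * (|C₁| + 1))).div_atTop
        (tendsto_id.const_mul_atTop two_pos))
  obtain ⟨B, hBε, hB⟩ :=
    ((hdirichlet.eventually (gt_mem_nhds (half_pos hε))).and (eventually_gt_atTop 0)).exists
  set η := min 1 (ε / (4 * B))
  obtain ⟨c, hc⟩ := eventually_atTop.1 <|
    (Metric.tendsto_nhds.1 htK η (by positivity)).and (eventually_ge_atTop A)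
  have hcA : A ≤ c := (hc c le_rfl).2
  set M := (∫ t in (0 : ℝ)..c, |K t|) + |C₁|
  have hM : 0 * M < ε / 4 := by rw [zero_mul]; positivity
  have hωc : Tendsto (fun ω : ℝ => ω * c) (𝓝 0) (𝓝 0) :=
    (continuous_mul_const c).tendsto' 0 0 (zero_mul c)
  filter_upwards [self_mem_nhdsWithin, nhdsWithin_le_nhds <|
    ((hωc.mul_const M).eventually (gt_mem_nhds hM)).and
      (hωc.eventually (gt_mem_nhds hB))] with ω (hω : 0 < ω) ⟨hωM, hωB⟩
  have hbound := abs_sub_le_of_tendsto_intervalIntegral_mul_sin (hA.trans_le hcA) hω hωB.le hK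
    (hanti.mono (Ici_subset_Ici.2 hcA))
    (fun t ht => hanti.nonneg_of_tendsto_atTop hK0 (hcA.trans ht)) (fun t ht => (hc t ht).1.le)
    (hKsin ω hω)
  have hηB : η * (4 * B) ≤ ε := (le_div_iff₀ (by positivity)).1 (min_le_right _ _)
  have htail : 3 * π * (C₁ + η) / (2 * B) ≤ 3 * π * (|C₁| + 1) / (2 * B) := by
    gcongr
    exacts [le_abs_self C₁, min_le_left _ _]
  rw [dist_eq]
  linarith

theorem stmt_0 (K : ℝ → ℝ) (C₁ : ℝ) (hC₁ : 0 < C₁)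
    (hloc : LocallyIntegrableOn K (Ioi 0))
    (hint0 : IntegrableOn K (Ioc 0 1))
    (hdec : ∃ A > (0:ℝ), AntitoneOn K (Ici A))
    (hK0 : Tendsto K atTop (nhds 0))
    (htK : Tendsto (fun t => t * K t) atTop (nhds C₁))
    (Ksin : ℝ → ℝ)
    (hKsin : ∀ ω > (0:ℝ),
      Tendsto (fun T => ∫ t in (0:ℝ)..T, K t * Real.sin (ω * t)) atTop (nhds (Ksin ω))) :
    Tendsto Ksin (nhdsWithin 0 (Ioi 0)) (nhds (C₁ * π / 2)) :=
  stmt_0_general K C₁ hloc hint0 hdec hK0 htK Ksin hKsin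
end

section
/- If K : (0,∞) → ℝ is locally integrable, eventually decreasing, tends to 0 at infinity, and satisfies K(t) ~ t^{-1} as t → ∞ (i.e., t·K(t) → C₁ > 0), then K_cos(ω) := ∫₀^∞ K(t) cos(ωt) dt satisfies K_cos(ω) / |log ω| → C₁ as ω → 0⁺. -/
/-!
For small `ω` the cosine transform behaves like `∫₀^{1/ω} K`. Below the cut-off `T = 1/ω` the
factor `cos (ω t)` differs from `1` by `O((ω t)²)`, which against `K t = O(1/t)` costs `O(1)`;
above it, the cosine integrates to zero over each period, so for antitone `K` the tail is
`O(K T / ω) = O(1)`. Finally `t K t → C₁` integrates to `∫₀^T K = C₁ log T + o(log T)`.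
-/

open MeasureTheory Filter Set Real

theorem integral_cos_mul_period {ω : ℝ} (hω : ω ≠ 0) (c : ℝ) :
    ∫ t in c..c + 2 * π / ω, cos (ω * t) = 0 := by
  rw [intervalIntegral.integral_comp_mul_left (fun x => cos x) hω, integral_cos,
    mul_add, mul_div_cancel₀ _ hω, sin_add_two_pi, sub_self, smul_zero]

theorem abs_integral_mul_cos_period_le {K : ℝ → ℝ} {ω c : ℝ} (hω : 0 < ω)
    (hK : AntitoneOn K (Icc c (c + 2 * π / ω))) :
    |∫ t in c..c + 2 * π / ω, K t * cos (ω * t)|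
      ≤ 2 * π / ω * (K c - K (c + 2 * π / ω)) := by
  set L := 2 * π / ω
  have hcL : c ≤ c + L := le_add_of_nonneg_right (by positivity)
  have hKint : IntervalIntegrable K volume c (c + L) :=
    AntitoneOn.intervalIntegrable (by rwa [uIcc_of_le hcL])
  have hcos : Continuous fun t => cos (ω * t) := by fun_prop
  -- a full period of `cos` integrates to zero, so `K` may be shifted by its value at `c + L`
  have hshift : ∫ t in c..c + L, K t * cos (ω * t)
      = ∫ t in c..c + L, (K t - K (c + L)) * cos (ω * t) := by
    simp_rw [sub_mul]
    rw [intervalIntegral.integral_sub (hKint.mul_continuousOn hcos.continuousOn)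
      ((hcos.intervalIntegrable _ _).const_mul _), intervalIntegral.integral_const_mul,
      integral_cos_mul_period hω.ne', mul_zero, sub_zero]
  have hbound : ∀ t ∈ uIoc c (c + L), ‖(K t - K (c + L)) * cos (ω * t)‖ ≤ K c - K (c + L) := by
    intro t ht
    rw [uIoc_of_le hcL] at ht
    have ht' : t ∈ Icc c (c + L) := Ioc_subset_Icc_self ht
    have hmid : K (c + L) ≤ K t := hK ht' (right_mem_Icc.2 hcL) ht.2
    have htop : K t ≤ K c := hK (left_mem_Icc.2 hcL) ht' ht.1.le
    rw [norm_mul, Real.norm_of_nonneg (sub_nonneg.2 hmid)]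
    calc (K t - K (c + L)) * ‖cos (ω * t)‖ ≤ (K t - K (c + L)) * 1 :=
          mul_le_mul_of_nonneg_left (abs_cos_le_one _) (sub_nonneg.2 hmid)
      _ ≤ K c - K (c + L) := by linarith
  have := intervalIntegral.norm_integral_le_of_norm_le_const hbound
  rw [hshift, ← Real.norm_eq_abs]
  rwa [add_sub_cancel_left, abs_of_nonneg (by positivity), mul_comm] at this

theorem abs_integral_mul_cos_le_sub_mul {K : ℝ → ℝ} {ω a b : ℝ} (hab : a ≤ b)
    (hK : AntitoneOn K (Icc a b)) (hKb : 0 ≤ K b) :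
    |∫ t in a..b, K t * cos (ω * t)| ≤ (b - a) * K a := by
  have hbound : ∀ t ∈ uIoc a b, ‖K t * cos (ω * t)‖ ≤ K a := by
    intro t ht
    rw [uIoc_of_le hab] at ht
    have ht' : t ∈ Icc a b := Ioc_subset_Icc_self ht
    have hpos : 0 ≤ K t := hKb.trans (hK ht' (right_mem_Icc.2 hab) ht.2)
    rw [norm_mul, Real.norm_of_nonneg hpos]
    calc K t * ‖cos (ω * t)‖ ≤ K t * 1 := mul_le_mul_of_nonneg_left (abs_cos_le_one _) hpos
      _ ≤ K a := by rw [mul_one]; exact hK (left_mem_Icc.2 hab) ht' ht.1.le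
  have := intervalIntegral.norm_integral_le_of_norm_le_const hbound
  rwa [abs_of_nonneg (sub_nonneg.2 hab), mul_comm, Real.norm_eq_abs] at this

theorem abs_integral_mul_cos_le_of_antitoneOn {K : ℝ → ℝ} {ω a b : ℝ} (hω : 0 < ω) (hab : a ≤ b)
    (hK : AntitoneOn K (Icc a b)) (hKb : 0 ≤ K b) :
    |∫ t in a..b, K t * cos (ω * t)| ≤ 2 * π / ω * K a := by
  set L := 2 * π / ω
  have hL : 0 < L := by positivity
  suffices key : ∀ n : ℕ, ∀ a, a ≤ b → b - a ≤ n * L → AntitoneOn K (Icc a b) →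
      |∫ t in a..b, K t * cos (ω * t)| ≤ L * K a by
    obtain ⟨n, hn⟩ := exists_nat_ge ((b - a) / L)
    exact key n a hab (by rwa [div_le_iff₀ hL] at hn) hK
  intro n
  induction n with
  | zero =>
    intro a hab hba _
    obtain rfl : a = b := le_antisymm hab (by simpa using hba)
    simpa using mul_nonneg hL.le hKb
  | succ n ih =>
    intro a hab hba hK
    rcases le_or_gt b (a + L) with hshort | hlong
    · calc |∫ t in a..b, K t * cos (ω * t)| ≤ (b - a) * K a :=
            abs_integral_mul_cos_le_sub_mul hab hK hKb
        _ ≤ L * K a := mul_le_mul_of_nonneg_right (by linarith)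
            (hKb.trans (hK (left_mem_Icc.2 hab) (right_mem_Icc.2 hab) hab))
    · have hsub : Icc a (a + L) ⊆ Icc a b := Icc_subset_Icc le_rfl hlong.le
      have hsub' : Icc (a + L) b ⊆ Icc a b := Icc_subset_Icc (by linarith) le_rfl
      have hcos : Continuous fun t => cos (ω * t) := by fun_prop
      have hint : ∀ u v, u ∈ Icc a b → v ∈ Icc a b →
          IntervalIntegrable (fun t => K t * cos (ω * t)) volume u v := fun u v hu hv =>
        (AntitoneOn.intervalIntegrable (hK.mono (uIcc_subset_Icc hu hv))).mul_continuousOn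
          hcos.continuousOn
      have hmem : a + L ∈ Icc a b := ⟨by linarith, hlong.le⟩
      rw [← intervalIntegral.integral_add_adjacent_intervals
        (hint a (a + L) (left_mem_Icc.2 hab) hmem) (hint (a + L) b hmem (right_mem_Icc.2 hab))]
      have hfirst := abs_integral_mul_cos_period_le hω (hK.mono hsub)
      have hrest := ih (a + L) hlong.le (by push_cast at hba; linarith) (hK.mono hsub')
      calc _ ≤ _ := abs_add_le _ _
        _ ≤ L * (K a - K (a + L)) + L * K (a + L) := add_le_add hfirst hrest
        _ = L * K a := by ring

theorem abs_integral_mul_cos_sub_one_le_integral_abs {K : ℝ → ℝ} {ω a b : ℝ} (hab : a ≤ b)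
    (hK : IntervalIntegrable K volume a b) :
    |∫ t in a..b, K t * (cos (ω * t) - 1)| ≤ 2 * ∫ t in a..b, |K t| := by
  rw [← intervalIntegral.integral_const_mul, ← Real.norm_eq_abs]
  refine intervalIntegral.norm_integral_le_of_norm_le hab (ae_of_all _ fun t _ => ?_)
    (hK.abs.const_mul 2)
  rw [norm_mul, Real.norm_eq_abs, mul_comm]
  gcongr
  exact (abs_sub _ _).trans (by rw [abs_one]; linarith [abs_cos_le_one (ω * t)])

theorem abs_integral_mul_cos_sub_one_le {K : ℝ → ℝ} {ω a b D : ℝ} (ha : 0 ≤ a) (hab : a ≤ b)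
    (hD : ∀ t ∈ Icc a b, |t * K t| ≤ D) :
    |∫ t in a..b, K t * (cos (ω * t) - 1)| ≤ D * ω ^ 2 * b ^ 2 / 2 := by
  have hD₀ : 0 ≤ D := (abs_nonneg _).trans (hD a (left_mem_Icc.2 hab))
  have hbound : ∀ t ∈ uIoc a b, ‖K t * (cos (ω * t) - 1)‖ ≤ D * ω ^ 2 * b / 2 := by
    intro t ht
    rw [uIoc_of_le hab] at ht
    have ht₀ : 0 ≤ t := ha.trans ht.1.le
    have hcos : |cos (ω * t) - 1| ≤ (ω * t) ^ 2 / 2 := by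
      rw [abs_sub_comm, abs_of_nonneg (by linarith [cos_le_one (ω * t)])]
      linarith [one_sub_sq_div_two_le_cos (x := ω * t)]
    calc ‖K t * (cos (ω * t) - 1)‖ ≤ |K t| * ((ω * t) ^ 2 / 2) := by
          rw [norm_mul, Real.norm_eq_abs, Real.norm_eq_abs]; gcongr
      _ = |t * K t| * (ω ^ 2 * t / 2) := by rw [abs_mul, abs_of_nonneg ht₀]; ring
      _ ≤ D * (ω ^ 2 * b / 2) := by
          gcongr
          · exact hD t (Ioc_subset_Icc_self ht)
          · exact ht.2
      _ = D * ω ^ 2 * b / 2 := by ring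
  have hb : 0 ≤ b := ha.trans hab
  have := intervalIntegral.norm_integral_le_of_norm_le_const hbound
  rw [Real.norm_eq_abs, abs_of_nonneg (sub_nonneg.2 hab)] at this
  calc _ ≤ D * ω ^ 2 * b / 2 * (b - a) := this
    _ ≤ D * ω ^ 2 * b / 2 * b := by gcongr; linarith
    _ = D * ω ^ 2 * b ^ 2 / 2 := by ring

theorem MeasureTheory.LocallyIntegrableOn.intervalIntegrable_of_nonneg {K : ℝ → ℝ}
    (hK : LocallyIntegrableOn K (Ici 0)) {a b : ℝ} (ha : 0 ≤ a) (hb : 0 ≤ b) :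
    IntervalIntegrable K volume a b :=
  (hK.integrableOn_compact_subset (fun _ ht => le_trans (le_min ha hb) ht.1)
    isCompact_uIcc).intervalIntegrable

theorem locallyIntegrableOn_Ici_zero {K : ℝ → ℝ} (hK : LocallyIntegrableOn K (Ioi 0))
    (hK₀ : IntegrableOn K (Ioc 0 1)) : LocallyIntegrableOn K (Ici 0) := by
  rw [locallyIntegrableOn_iff isClosed_Ici.isLocallyClosed]
  intro k hk hkc
  obtain ⟨R, hR⟩ := hkc.bddAbove
  have hR' : IntegrableOn K (Icc 1 R) :=
    hK.integrableOn_compact_subset (fun t ht => zero_lt_one.trans_le ht.1) isCompact_Icc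
  refine ((hK₀.union hR').mono_set fun t ht => ?_).congr_set_ae Ioc_ae_eq_Icc.symm
    |>.mono_set fun t ht => ⟨hk ht, hR ht⟩
  rcases le_total t 1 with h | h
  · exact Or.inl ⟨ht.1, h⟩
  · exact Or.inr ⟨h, ht.2⟩

theorem abs_integral_sub_mul_log_le {f : ℝ → ℝ} {a b C ε : ℝ} (ha : 0 < a) (hab : a ≤ b)
    (hf : IntervalIntegrable f volume a b) (hε : ∀ t ∈ Icc a b, |t * f t - C| ≤ ε) :
    |(∫ t in a..b, f t) - C * log (b / a)| ≤ ε * log (b / a) := by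
  have hinv : IntervalIntegrable (fun t => t⁻¹) volume a b :=
    (continuousOn_inv₀.mono fun t ht =>
      (ha.trans_le (uIcc_of_le hab ▸ ht).1).ne').intervalIntegrable
  rw [← integral_inv_of_pos ha (ha.trans_le hab), ← intervalIntegral.integral_const_mul,
    ← intervalIntegral.integral_const_mul, ← intervalIntegral.integral_sub hf (hinv.const_mul C),
    ← Real.norm_eq_abs]
  refine intervalIntegral.norm_integral_le_of_norm_le hab (ae_of_all _ fun t ht => ?_)
    (hinv.const_mul ε)
  obtain ⟨hat, htb⟩ := ht
  have ht : 0 < t := ha.trans hat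
  rw [Real.norm_eq_abs, show f t - C * t⁻¹ = (t * f t - C) / t by field_simp, abs_div,
    abs_of_pos ht, div_eq_mul_inv]
  exact mul_le_mul_of_nonneg_right (hε t ⟨hat.le, htb⟩) (inv_nonneg.2 ht.le)

theorem isLittleO_integral_sub_mul_log {K : ℝ → ℝ} {C : ℝ} (hK : LocallyIntegrableOn K (Ici 0))
    (htK : Tendsto (fun t => t * K t) atTop (nhds C)) :
    (fun T => (∫ t in (0:ℝ)..T, K t) - C * log T) =o[atTop] log := by
  rw [Asymptotics.isLittleO_iff]
  intro c hc
  obtain ⟨T₀, hT₀⟩ := eventually_atTop.1 <| htK.eventually <|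
    Metric.closedBall_mem_nhds C (half_pos hc)
  set T₁ := max T₀ 1
  have hT₁ : 1 ≤ T₁ := le_max_right _ _
  set R := (∫ t in (0:ℝ)..T₁, K t) - C * log T₁
  filter_upwards [eventually_ge_atTop T₁,
    tendsto_log_atTop.eventually_ge_atTop (2 * |R| / c)] with T hT hlogT
  have hT₁pos : 0 < T₁ := zero_lt_one.trans_le hT₁
  have htail := abs_integral_sub_mul_log_le hT₁pos hT
    (hK.intervalIntegrable_of_nonneg hT₁pos.le (hT₁pos.le.trans hT))
    fun t ht => mem_closedBall_iff_norm.1 (hT₀ t ((le_max_left _ _).trans ht.1))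
  have hsplit : (∫ t in (0:ℝ)..T, K t) - C * log T
      = R + ((∫ t in T₁..T, K t) - C * log (T / T₁)) := by
    rw [← intervalIntegral.integral_add_adjacent_intervals
      (hK.intervalIntegrable_of_nonneg le_rfl hT₁pos.le)
      (hK.intervalIntegrable_of_nonneg hT₁pos.le (hT₁pos.le.trans hT)),
      log_div (hT₁pos.trans_le hT).ne' hT₁pos.ne']
    ring
  have hlog_le : log (T / T₁) ≤ log T := by
    rw [log_div (hT₁pos.trans_le hT).ne' hT₁pos.ne']
    linarith [log_nonneg hT₁]
  have hR : |R| ≤ c / 2 * log T := by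
    rw [div_le_iff₀' hc] at hlogT
    linarith
  rw [hsplit, Real.norm_eq_abs, Real.norm_eq_abs, abs_of_nonneg (log_nonneg (hT₁.trans hT))]
  calc |R + ((∫ t in T₁..T, K t) - C * log (T / T₁))|
      ≤ |R| + c / 2 * log (T / T₁) := (abs_add_le _ _).trans (add_le_add_right htail _)
    _ ≤ c * log T := by nlinarith

theorem abs_integral_mul_cos_sub_integral_le {K : ℝ → ℝ} {ω A T S D : ℝ}
    (hK : LocallyIntegrableOn K (Ici 0)) (hω : 0 < ω) (hA : 0 ≤ A) (hAT : A ≤ T) (hTS : T ≤ S)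
    (hanti : AntitoneOn K (Ici A)) (hKnn : ∀ t ≥ A, 0 ≤ K t) (hD : ∀ t ≥ A, t * K t ≤ D) :
    |(∫ t in (0:ℝ)..S, K t * cos (ω * t)) - ∫ t in (0:ℝ)..T, K t|
      ≤ 2 * (∫ t in (0:ℝ)..A, |K t|) + D * ω ^ 2 * T ^ 2 / 2 + 2 * π / ω * K T := by
  have hT : 0 ≤ T := hA.trans hAT
  have hS : 0 ≤ S := hT.trans hTS
  have hcos : Continuous fun t => cos (ω * t) := by fun_prop
  have hKint : ∀ {u v}, 0 ≤ u → 0 ≤ v → IntervalIntegrable K volume u v :=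
    hK.intervalIntegrable_of_nonneg
  have hKcos : ∀ {u v}, 0 ≤ u → 0 ≤ v →
      IntervalIntegrable (fun t => K t * cos (ω * t)) volume u v := fun hu hv =>
    (hKint hu hv).mul_continuousOn hcos.continuousOn
  have hKcos₁ : ∀ {u v}, 0 ≤ u → 0 ≤ v →
      IntervalIntegrable (fun t => K t * (cos (ω * t) - 1)) volume u v := fun hu hv =>
    (hKint hu hv).mul_continuousOn (hcos.sub continuous_const).continuousOn
  have hsplit : (∫ t in (0:ℝ)..S, K t * cos (ω * t)) - ∫ t in (0:ℝ)..T, K t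
      = (∫ t in (0:ℝ)..A, K t * (cos (ω * t) - 1)) + (∫ t in A..T, K t * (cos (ω * t) - 1))
        + ∫ t in T..S, K t * cos (ω * t) := by
    have hsub : ∫ t in (0:ℝ)..T, K t * (cos (ω * t) - 1)
        = (∫ t in (0:ℝ)..T, K t * cos (ω * t)) - ∫ t in (0:ℝ)..T, K t := by
      simp only [mul_sub, mul_one]
      exact intervalIntegral.integral_sub (hKcos le_rfl hT) (hKint le_rfl hT)
    rw [← intervalIntegral.integral_add_adjacent_intervals (hKcos le_rfl hT) (hKcos hT hS),
      intervalIntegral.integral_add_adjacent_intervals (hKcos₁ le_rfl hA) (hKcos₁ hA hT), hsub]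
    ring
  have hhead := abs_integral_mul_cos_sub_one_le_integral_abs (ω := ω) hA (hKint le_rfl hA)
  have hmid := abs_integral_mul_cos_sub_one_le (ω := ω) (D := D) hA hAT fun t ht => by
    rw [abs_of_nonneg (mul_nonneg (hA.trans ht.1) (hKnn t ht.1))]
    exact hD t ht.1
  have htail := abs_integral_mul_cos_le_of_antitoneOn hω hTS
    (hanti.mono (Icc_subset_Ici_iff hTS |>.2 hAT)) (hKnn S (hAT.trans hTS))
  rw [hsplit]
  exact (abs_add_three _ _ _).trans (add_le_add_three hhead hmid htail)

theorem isBigO_sub_integral_of_tendsto_integral_mul_cos {K Kcos : ℝ → ℝ} {C : ℝ} (hC : 0 < C)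
    (hK : LocallyIntegrableOn K (Ici 0)) (hanti : ∃ A, AntitoneOn K (Ici A))
    (htK : Tendsto (fun t => t * K t) atTop (nhds C))
    (hKcos : ∀ ω > (0:ℝ),
      Tendsto (fun S => ∫ t in (0:ℝ)..S, K t * cos (ω * t)) atTop (nhds (Kcos ω))) :
    (fun T => Kcos T⁻¹ - ∫ t in (0:ℝ)..T, K t) =O[atTop] fun _ => (1 : ℝ) := by
  obtain ⟨A₀, hA₀⟩ := hanti
  obtain ⟨A₁, hA₁⟩ := eventually_atTop.1 <| htK.eventually <| Ioo_mem_nhds hC (lt_add_one C)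
  set A := max (max A₀ A₁) 1
  have hA : 0 < A := zero_lt_one.trans_le (le_max_right _ _)
  have hA₁A : A₁ ≤ A := (le_max_right _ _).trans (le_max_left _ _)
  have hKnn : ∀ t ≥ A, 0 ≤ K t := fun t ht =>
    (pos_of_mul_pos_right (hA₁ t (hA₁A.trans ht)).1 (hA.le.trans ht)).le
  have hD : ∀ t ≥ A, t * K t ≤ C + 1 := fun t ht => (hA₁ t (hA₁A.trans ht)).2.le
  refine Asymptotics.isBigO_iff.2
    ⟨2 * (∫ t in (0:ℝ)..A, |K t|) + (C + 1) / 2 + 2 * π * (C + 1), ?_⟩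
  filter_upwards [eventually_ge_atTop A] with T hAT
  have hT : 0 < T := hA.trans_le hAT
  rw [norm_one, mul_one, Real.norm_eq_abs]
  refine le_of_tendsto ((hKcos T⁻¹ (inv_pos.2 hT)).sub_const _).abs ?_
  filter_upwards [eventually_ge_atTop T] with S hS
  refine (abs_integral_mul_cos_sub_integral_le hK (inv_pos.2 hT) hA.le hAT hS
    (hA₀.mono (Ici_subset_Ici.2 ((le_max_left _ _).trans (le_max_left _ _)))) hKnn hD).trans ?_
  have hTK : 2 * π / T⁻¹ * K T ≤ 2 * π * (C + 1) := by
    rw [div_inv_eq_mul, mul_assoc]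
    exact mul_le_mul_of_nonneg_left (hD T hAT) (by positivity)
  have hmid : (C + 1) * T⁻¹ ^ 2 * T ^ 2 / 2 = (C + 1) / 2 := by field_simp
  linarith

theorem stmt_1_general (K : ℝ → ℝ) (C₁ : ℝ) (hC₁ : 0 < C₁)
    (hloc : LocallyIntegrableOn K (Ioi 0))
    (hint0 : IntegrableOn K (Ioc 0 1))
    (hdec : ∃ A > (0:ℝ), AntitoneOn K (Ici A))
    (htK : Tendsto (fun t => t * K t) atTop (nhds C₁))
    (Kcos : ℝ → ℝ)
    (hKcos : ∀ ω > (0:ℝ),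
      Tendsto (fun T => ∫ t in (0:ℝ)..T, K t * Real.cos (ω * t)) atTop (nhds (Kcos ω))) :
    Tendsto (fun ω => Kcos ω / |Real.log ω|) (nhdsWithin 0 (Ioi 0)) (nhds C₁) := by
  have hK := locallyIntegrableOn_Ici_zero hloc hint0
  obtain ⟨A, -, hA⟩ := hdec
  have hbounded := isBigO_sub_integral_of_tendsto_integral_mul_cos hC₁ hK ⟨A, hA⟩ htK hKcos
  have hlog : (fun _ => (1 : ℝ)) =o[atTop] log :=
    Asymptotics.isLittleO_const_left.2 <| Or.inr <| tendsto_norm_atTop_atTop.comp tendsto_log_atTop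
  have hsmall : (fun T => Kcos T⁻¹ - C₁ * log T) =o[atTop] log :=
    ((hbounded.trans_isLittleO hlog).add (isLittleO_integral_sub_mul_log hK htK)).congr_left
      fun T => by ring
  have hdiv : Tendsto (fun T => Kcos T⁻¹ / log T) atTop (nhds C₁) := by
    have := hsmall.tendsto_div_nhds_zero.add_const C₁
    rw [zero_add] at this
    refine this.congr' ?_
    filter_upwards [eventually_gt_atTop 1] with T hT
    rw [sub_div, mul_div_assoc, div_self (log_pos hT).ne', mul_one, sub_add_cancel]
  refine (hdiv.comp tendsto_inv_nhdsGT_zero).congr' ?_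
  filter_upwards [Ioo_mem_nhdsGT one_pos] with ω hω
  simp only [Function.comp_apply, inv_inv, log_inv, abs_of_neg (log_neg hω.1 hω.2)]

theorem stmt_1 (K : ℝ → ℝ) (C₁ : ℝ) (hC₁ : 0 < C₁)
    (hloc : LocallyIntegrableOn K (Ioi 0))
    (hint0 : IntegrableOn K (Ioc 0 1))
    (hdec : ∃ A > (0:ℝ), AntitoneOn K (Ici A))
    (hK0 : Tendsto K atTop (nhds 0))
    (htK : Tendsto (fun t => t * K t) atTop (nhds C₁))
    (Kcos : ℝ → ℝ)
    (hKcos : ∀ ω > (0:ℝ),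
      Tendsto (fun T => ∫ t in (0:ℝ)..T, K t * Real.cos (ω * t)) atTop (nhds (Kcos ω))) :
    Tendsto (fun ω => Kcos ω / |Real.log ω|) (nhdsWithin 0 (Ioi 0)) (nhds C₁) :=
  stmt_1_general K C₁ hC₁ hloc hint0 hdec htK Kcos hKcos
end

section
/- Let K : (0,∞) → ℝ be locally integrable, eventually decreasing, K(t) → 0 as t → ∞, with sup_{t ≥ 1} |t·K(t)| < ∞. Then (K_cos(ω) − ∫₀^{1/ω} K(t) dt) / |log ω| → 0 as ω → 0⁺. -/
open MeasureTheory Filter Set Real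

/-!
Split `K_cos(ω) - ∫₀^{1/ω} K` at `a = 1/ω`. On `[0, a]` the integrand `K(t) (cos ωt - 1)` is
bounded by `|K(t)| ωt`, whose integral is at most `∫₀¹ |K| + M` since `|t K(t)| ≤ M` for `t ≥ 1`.
On `[a, ∞)` the kernel is nonnegative and decreasing, so the oscillatory tail is `O(K(a)/ω) = O(M)`.
The numerator therefore stays bounded while `|log ω| → ∞`.
-/

lemma intervalIntegrable_of_locallyIntegrableOn_Ioi {E : Type*} [NormedAddCommGroup E]
    {f : ℝ → E} (hf : LocallyIntegrableOn f (Ioi 0)) {b c : ℝ} (hb : 0 < b) (hc : 0 < c) :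
    IntervalIntegrable f volume b c :=
  (hf.integrableOn_compact_subset (fun _ hx ↦ (lt_min hb hc).trans_le hx.1)
    isCompact_uIcc).intervalIntegrable

lemma integral_comp_add_right_eq_sub {E : Type*} [NormedAddCommGroup E] [NormedSpace ℝ E]
    {f : ℝ → E} {a b h : ℝ} (hab : IntervalIntegrable f volume a (b + h))
    (hah : IntervalIntegrable f volume a (a + h)) :
    ∫ u in a..b, f (u + h) = (∫ u in a..b + h, f u) - ∫ u in a..a + h, f u := by
  rw [intervalIntegral.integral_comp_add_right, intervalIntegral.integral_interval_sub_left hab hah]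

section AntitoneTail

variable {f : ℝ → ℝ} {a : ℝ}

lemma AntitoneOn.intervalIntegrable_Ici (hf : AntitoneOn f (Ici a)) {c : ℝ} (hc : a ≤ c) :
    IntervalIntegrable f volume a c :=
  (hf.mono (uIcc_of_le hc ▸ Icc_subset_Ici_self)).intervalIntegrable

lemma AntitoneOn.intervalIntegrable_mul_cos (hf : AntitoneOn f (Ici a)) (ω : ℝ) {c : ℝ}
    (hc : a ≤ c) : IntervalIntegrable (fun t ↦ f t * cos (ω * t)) volume a c :=
  (hf.intervalIntegrable_Ici hc).mul_continuousOn (by fun_prop)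

lemma AntitoneOn.comp_add_right (hf : AntitoneOn f (Ici a)) {h : ℝ} (hh : 0 ≤ h) :
    AntitoneOn (fun u ↦ f (u + h)) (Ici a) := fun x hx y hy hxy ↦
  hf (show a ≤ x + h by linarith [mem_Ici.1 hx]) (show a ≤ y + h by linarith [mem_Ici.1 hy])
    (by linarith)

lemma abs_integral_mul_cos_le_mul (hf : AntitoneOn f (Ici a)) (hf0 : ∀ t ≥ a, 0 ≤ f t)
    (ω : ℝ) {b c : ℝ} (hab : a ≤ b) (hbc : b ≤ c) :
    |∫ t in b..c, f t * cos (ω * t)| ≤ (c - b) * f a := by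
  have := intervalIntegral.norm_integral_le_of_norm_le_const
    (f := fun t ↦ f t * cos (ω * t)) (C := f a) (a := b) (b := c) fun t ht ↦ by
      rw [uIoc_of_le hbc] at ht
      have hat : a ≤ t := hab.trans ht.1.le
      rw [norm_mul, Real.norm_of_nonneg (hf0 t hat)]
      exact (mul_le_of_le_one_right (hf0 t hat) (abs_cos_le_one _)).trans
        (hf self_mem_Ici hat hat)
  rwa [Real.norm_eq_abs, abs_of_nonneg (sub_nonneg.2 hbc), mul_comm] at this

lemma abs_integral_sub_comp_add_mul_cos_le (hf : AntitoneOn f (Ici a))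
    (hf0 : ∀ t ≥ a, 0 ≤ f t) (ω : ℝ) {h T : ℝ} (hh : 0 ≤ h) (hT : a + h ≤ T) :
    |∫ u in a..T - h, (f u - f (u + h)) * cos (ω * u)| ≤ h * f a := by
  have hfh := hf.comp_add_right hh
  have hdiff : IntervalIntegrable (fun u ↦ f u - f (u + h)) volume a (T - h) :=
    (hf.intervalIntegrable_Ici (by linarith)).sub (hfh.intervalIntegrable_Ici (by linarith))
  have htelescope : ∫ u in a..T - h, (f u - f (u + h))
      = (∫ u in a..a + h, f u) - ∫ u in T - h..T, f u := by
    rw [intervalIntegral.integral_sub (hf.intervalIntegrable_Ici (by linarith))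
        (hfh.intervalIntegrable_Ici (by linarith)),
      integral_comp_add_right_eq_sub (by simpa using hf.intervalIntegrable_Ici (by linarith))
        (hf.intervalIntegrable_Ici (by linarith)), sub_add_cancel]
    have hsplit := intervalIntegral.integral_interval_sub_left
      (hf.intervalIntegrable_Ici (by linarith : a ≤ T))
      (hf.intervalIntegrable_Ici (by linarith : a ≤ T - h))
    linarith
  have hlast : 0 ≤ ∫ u in T - h..T, f u :=
    intervalIntegral.integral_nonneg (by linarith) fun u hu ↦ hf0 u (by linarith [hu.1])
  have hfirst : ∫ u in a..a + h, f u ≤ h * f a := by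
    have := abs_integral_mul_cos_le_mul hf hf0 0 le_rfl (le_add_of_nonneg_right hh)
    simp only [zero_mul, cos_zero, mul_one, add_sub_cancel_left] at this
    exact (le_abs_self _).trans this
  calc |∫ u in a..T - h, (f u - f (u + h)) * cos (ω * u)|
      ≤ ∫ u in a..T - h, (f u - f (u + h)) := by
        refine (Real.norm_eq_abs _).symm.trans_le
          (intervalIntegral.norm_integral_le_of_norm_le (by linarith) ?_ hdiff)
        refine ae_of_all _ fun u hu ↦ ?_
        have hfu : f (u + h) ≤ f u :=
          hf (mem_Ici.2 hu.1.le) (show a ≤ u + h by linarith [hu.1]) (by linarith)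
        rw [norm_mul, Real.norm_of_nonneg (sub_nonneg.2 hfu)]
        exact mul_le_of_le_one_right (sub_nonneg.2 hfu) (abs_cos_le_one _)
    _ ≤ h * f a := by linarith

/-- Pairing each point with the one half a period `π / ω` later turns the oscillatory integral of
a nonnegative decreasing function into a telescoping sum, up to two boundary pieces. -/
lemma abs_integral_mul_cos_le_of_antitoneOn_s3 (hf : AntitoneOn f (Ici a))
    (hf0 : ∀ t ≥ a, 0 ≤ f t) {ω T : ℝ} (hω : 0 < ω) (hT : a + π / ω ≤ T) :
    |∫ t in a..T, f t * cos (ω * t)| ≤ 3 * (π / ω) * f a := by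
  set h := π / ω with hh
  have hh0 : 0 < h := by positivity
  set g := fun t ↦ f t * cos (ω * t) with hg
  have hgi : ∀ c ≥ a, IntervalIntegrable g volume a c := fun c hc ↦
    hf.intervalIntegrable_mul_cos ω hc
  have hshift : ∀ u, g (u + h) = -(f (u + h) * cos (ω * u)) := fun u ↦ by
    rw [hg]
    dsimp only
    rw [mul_add, hh, mul_div_cancel₀ _ hω.ne', cos_add_pi, mul_neg]
  have hpair : ∫ u in a..T - h, (f u - f (u + h)) * cos (ω * u)
      = 2 * (∫ t in a..T, g t) - (∫ t in T - h..T, g t) - ∫ t in a..a + h, g t := by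
    have hsplit := intervalIntegral.integral_interval_sub_left (hgi T (by linarith))
      (hgi (T - h) (by linarith))
    have hcomp := integral_comp_add_right_eq_sub (b := T - h) (by simpa using hgi T (by linarith))
      (hgi (a + h) (by linarith))
    simp only [hshift, intervalIntegral.integral_neg, sub_add_cancel] at hcomp
    rw [intervalIntegral.integral_congr (g := fun u ↦ g u - f (u + h) * cos (ω * u))
        fun u _ ↦ by simp only [hg]; ring,
      intervalIntegral.integral_sub (hgi _ (by linarith))
        ((hf.comp_add_right hh0.le).intervalIntegrable_mul_cos ω (by linarith))]
    linarith
  have hmain := abs_integral_sub_comp_add_mul_cos_le hf hf0 ω hh0.le hT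
  have hend :=
    abs_integral_mul_cos_le_mul hf hf0 ω (b := T - h) (c := T) (by linarith) (by linarith)
  have hstart := abs_integral_mul_cos_le_mul hf hf0 ω le_rfl (le_add_of_nonneg_right hh0.le)
  rw [hpair] at hmain
  simp only [sub_sub_cancel, add_sub_cancel_left] at hend hstart
  rw [abs_le] at hmain hend hstart ⊢
  constructor <;> nlinarith

end AntitoneTail

lemma abs_integral_mul_cos_sub_one_le_s3 {K : ℝ → ℝ} {M ω : ℝ}
    (h01 : IntervalIntegrable K volume 0 1) (h1 : IntervalIntegrable K volume 1 (1 / ω))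
    (hM : ∀ t ≥ (1 : ℝ), |t * K t| ≤ M) (hω : 0 < ω) (hω1 : 1 ≤ 1 / ω) :
    |∫ t in (0 : ℝ)..1 / ω, K t * (cos (ω * t) - 1)| ≤ (∫ t in (0 : ℝ)..1, |K t|) + M := by
  have hM0 : 0 ≤ M := (abs_nonneg _).trans (hM 1 le_rfl)
  have hpt : ∀ t, |K t * (cos (ω * t) - 1)| ≤ |K t| * |ω * t| := fun t ↦ by
    rw [abs_mul]
    exact mul_le_mul_of_nonneg_left (by simpa using abs_cos_sub_cos_le (ω * t) 0) (abs_nonneg _)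
  have hi : ∀ {b c}, IntervalIntegrable K volume b c →
      IntervalIntegrable (fun t ↦ K t * (cos (ω * t) - 1)) volume b c := fun h ↦
    h.mul_continuousOn (by fun_prop)
  have hnear : |∫ t in (0 : ℝ)..1, K t * (cos (ω * t) - 1)| ≤ ∫ t in (0 : ℝ)..1, |K t| := by
    refine (Real.norm_eq_abs _).symm.trans_le
      (intervalIntegral.norm_integral_le_of_norm_le zero_le_one (ae_of_all _ fun t ht ↦ ?_) h01.abs)
    have hωt : |ω * t| ≤ 1 := by
      have hω1' : ω ≤ 1 := by rwa [le_div_iff₀ hω, one_mul] at hω1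
      rw [abs_of_pos (mul_pos hω ht.1)]
      nlinarith [ht.2]
    exact (hpt t).trans (mul_le_of_le_one_right (abs_nonneg _) hωt)
  have hfar : |∫ t in (1 : ℝ)..1 / ω, K t * (cos (ω * t) - 1)| ≤ M := by
    have := intervalIntegral.norm_integral_le_of_norm_le_const (C := ω * M)
      (f := fun t ↦ K t * (cos (ω * t) - 1)) (a := 1) (b := 1 / ω) fun t ht ↦ by
        rw [uIoc_of_le hω1] at ht
        have ht0 : 0 < t := one_pos.trans ht.1
        calc ‖K t * (cos (ω * t) - 1)‖ ≤ |K t| * |ω * t| := hpt t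
          _ = ω * |t * K t| := by
            rw [abs_mul, abs_mul, abs_of_pos hω, abs_of_pos ht0]; ring
          _ ≤ ω * M := by gcongr; exact hM t ht.1.le
    rw [Real.norm_eq_abs, abs_of_nonneg (sub_nonneg.2 hω1)] at this
    refine this.trans ?_
    calc ω * M * (1 / ω - 1) ≤ ω * M * (1 / ω) := by gcongr; linarith
      _ = M := by field_simp
  rw [← intervalIntegral.integral_add_adjacent_intervals (hi h01) (hi h1)]
  exact (abs_add_le _ _).trans (add_le_add hnear hfar)

lemma abs_sub_integral_le_of_tendsto_integral_mul_cos {K : ℝ → ℝ} {A M ω Kω : ℝ}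
    (hloc : LocallyIntegrableOn K (Ioi 0)) (hint0 : IntegrableOn K (Ioc 0 1))
    (hA : AntitoneOn K (Ici A)) (hK0 : Tendsto K atTop (nhds 0))
    (hM : ∀ t ≥ (1 : ℝ), |t * K t| ≤ M) (hω : 0 < ω) (hω1 : 1 ≤ 1 / ω) (hωA : A ≤ 1 / ω)
    (hKω : Tendsto (fun T ↦ ∫ t in (0 : ℝ)..T, K t * cos (ω * t)) atTop (nhds Kω)) :
    |Kω - ∫ t in (0 : ℝ)..1 / ω, K t| ≤ (∫ t in (0 : ℝ)..1, |K t|) + M + 3 * π * M := by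
  set a := 1 / ω with ha
  have ha0 : 0 < a := by positivity
  have hanti : AntitoneOn K (Ici a) := hA.mono (Ici_subset_Ici.2 hωA)
  have hnonneg : ∀ t ≥ a, 0 ≤ K t := fun t ht ↦ le_of_tendsto hK0 <|
    (eventually_ge_atTop t).mono fun s hs ↦ hanti ht (ht.trans hs) hs
  have hKa : K a ≤ ω * M := by
    have := (abs_le.1 (hM a hω1)).2
    rw [ha, div_mul_eq_mul_div, one_mul, div_le_iff₀ hω] at this
    linarith
  have h01 : IntervalIntegrable K volume 0 1 := by
    rwa [intervalIntegrable_iff_integrableOn_Ioc_of_le zero_le_one]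
  have h1a := intervalIntegrable_of_locallyIntegrableOn_Ioi hloc one_pos ha0
  have h0a := h01.trans h1a
  have hbound : ∀ T ≥ a + π / ω,
      |(∫ t in (0 : ℝ)..T, K t * cos (ω * t)) - ∫ t in (0 : ℝ)..a, K t|
        ≤ (∫ t in (0 : ℝ)..1, |K t|) + M + 3 * π * M := fun T hT ↦ by
    have htail := abs_integral_mul_cos_le_of_antitoneOn_s3 hanti hnonneg hω hT
    have hnear := abs_integral_mul_cos_sub_one_le_s3 h01 h1a hM hω hω1
    have hsplit : (∫ t in (0 : ℝ)..T, K t * cos (ω * t)) - ∫ t in (0 : ℝ)..a, K t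
        = (∫ t in (0 : ℝ)..a, K t * (cos (ω * t) - 1)) + ∫ t in a..T, K t * cos (ω * t) := by
      rw [← intervalIntegral.integral_add_adjacent_intervals (h0a.mul_continuousOn (by fun_prop))
        (hanti.intervalIntegrable_mul_cos ω (by linarith [div_pos pi_pos hω]))]
      simp only [mul_sub, mul_one]
      rw [intervalIntegral.integral_sub (h0a.mul_continuousOn (by fun_prop)) h0a]
      ring
    have h3 : 3 * (π / ω) * K a ≤ 3 * π * M := by
      calc 3 * (π / ω) * K a ≤ 3 * (π / ω) * (ω * M) := by gcongr
        _ = 3 * π * M := by field_simp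
    rw [hsplit]
    exact (abs_add_le _ _).trans (by linarith)
  exact le_of_tendsto ((hKω.sub_const _).abs) ((eventually_ge_atTop _).mono hbound)

lemma tendsto_div_abs_log_nhdsGT_zero_of_abs_le {f : ℝ → ℝ} {C : ℝ}
    (hf : ∀ᶠ x in nhdsWithin 0 (Ioi 0), |f x| ≤ C) :
    Tendsto (fun x ↦ f x / |log x|) (nhdsWithin 0 (Ioi 0)) (nhds 0) :=
  squeeze_zero_norm' (a := fun x ↦ C / |log x|) (hf.mono fun x hx ↦ by
      rw [norm_div, Real.norm_eq_abs, Real.norm_eq_abs, abs_abs]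
      exact div_le_div_of_nonneg_right hx (abs_nonneg _))
    (tendsto_const_nhds.div_atTop (tendsto_abs_atBot_atTop.comp tendsto_log_nhdsGT_zero))

theorem stmt_3 (K : ℝ → ℝ)
    (hloc : LocallyIntegrableOn K (Ioi 0))
    (hint0 : IntegrableOn K (Ioc 0 1))
    (hdec : ∃ A > (0:ℝ), AntitoneOn K (Ici A))
    (hK0 : Tendsto K atTop (nhds 0))
    (hsup : ∃ M : ℝ, ∀ t ≥ (1:ℝ), |t * K t| ≤ M)
    (Kcos : ℝ → ℝ)
    (hKcos : ∀ ω > (0:ℝ),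
      Tendsto (fun T => ∫ t in (0:ℝ)..T, K t * Real.cos (ω * t)) atTop (nhds (Kcos ω))) :
    Tendsto (fun ω => (Kcos ω - ∫ t in (0:ℝ)..(1/ω), K t) / |Real.log ω|)
      (nhdsWithin 0 (Ioi 0)) (nhds 0) := by
  obtain ⟨A, -, hA⟩ := hdec
  obtain ⟨M, hM⟩ := hsup
  refine tendsto_div_abs_log_nhdsGT_zero_of_abs_le
    (C := (∫ t in (0 : ℝ)..1, |K t|) + M + 3 * π * M) ?_
  filter_upwards [self_mem_nhdsWithin, tendsto_inv_nhdsGT_zero.eventually_ge_atTop (max 1 A)]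
    with ω hω hωmax
  rw [← one_div, max_le_iff] at hωmax
  exact abs_sub_integral_le_of_tendsto_integral_mul_cos hloc hint0 hA hK0 hM hω hωmax.1 hωmax.2
    (hKcos ω hω)
end

section
/- Suppose K : (0,∞) → [0,∞) is locally integrable, eventually decreasing with K(t) → 0 at infinity, and there exist constants C₁ > 0 and β₁ > 0 such that |t·K(t) − C₁| = O(t^{-β₁}) as t → ∞. Then |K_cos(ω)/|log ω| − C₁| = O(|log ω|^{-1}) as ω → 0⁺. -/
/-!
By the rate hypothesis, `K t - C₁ / t` is absolutely integrable on `[B, ∞)` for large `B`, so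
up to `O(1)` the integral `∫₀ᵀ K t cos (ω t) dt` equals `C₁ ∫_B^T cos (ω t) / t dt`. On
`[B, 1/ω]` we have `cos (ω t) = 1 + O((ω t)²)`, which makes this `C₁ log (1 / (ω B)) + O(1)`,
and on `[1/ω, T]` an integration by parts against `sin (ω t) / ω` bounds it by `2 |C₁|`,
uniformly in `T`. Hence `K_cos ω = C₁ |log ω| + O(1)` as `ω → 0⁺`.
-/

open MeasureTheory Filter Set Real Asymptotics

theorem abs_integral_cos_mul_div_le {ω S T : ℝ} (hω : 0 < ω) (hS : 0 < S) (hST : S ≤ T) :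
    |∫ t in S..T, cos (ω * t) / t| ≤ 2 / (ω * S) := by
  have hpos : ∀ t ∈ uIcc S T, 0 < t := fun t ht => hS.trans_le (by simpa [hST] using ht.1)
  have hinv : ∀ t ∈ uIcc S T, HasDerivAt (fun t : ℝ => t⁻¹) (-(t ^ 2)⁻¹) t :=
    fun t ht => hasDerivAt_inv (hpos t ht).ne'
  have hsin : ∀ t ∈ uIcc S T, HasDerivAt (fun t => sin (ω * t) / ω) (cos (ω * t)) t := by
    intro t _
    have h := ((hasDerivAt_id' t).const_mul ω).sin.div_const ω
    rwa [mul_one, mul_div_cancel_right₀ _ hω.ne'] at h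
  have hsq : ContinuousOn (fun t : ℝ => (t ^ 2)⁻¹) (uIcc S T) :=
    (continuousOn_pow 2).inv₀ fun t ht => pow_ne_zero 2 (hpos t ht).ne'
  have hsin_le : ∀ x y, |x * (sin (ω * y) / ω)| ≤ |x| / ω := fun x y =>
    calc |x * (sin (ω * y) / ω)| = |x| * |sin (ω * y)| / ω := by
          rw [abs_mul, abs_div, abs_of_pos hω, mul_div_assoc]
      _ ≤ |x| * 1 / ω := by gcongr; exact abs_sin_le_one _
      _ = |x| / ω := by rw [mul_one]
  have hibp := intervalIntegral.integral_mul_deriv_eq_deriv_mul hinv hsin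
    hsq.neg.intervalIntegrable
    ((by fun_prop : Continuous fun t => cos (ω * t)).intervalIntegrable S T)
  have hrem : |∫ t in S..T, -(t ^ 2)⁻¹ * (sin (ω * t) / ω)| ≤ (S⁻¹ - T⁻¹) / ω := by
    have hint : ∫ t in S..T, (t ^ 2)⁻¹ = S⁻¹ - T⁻¹ := by
      have := intervalIntegral.integral_eq_sub_of_hasDerivAt (fun t ht => (hinv t ht).neg)
        hsq.neg.neg.intervalIntegrable
      simp only [neg_neg, Pi.neg_apply] at this
      linarith
    calc |∫ t in S..T, -(t ^ 2)⁻¹ * (sin (ω * t) / ω)|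
        ≤ ∫ t in S..T, |-(t ^ 2)⁻¹ * (sin (ω * t) / ω)| :=
          intervalIntegral.abs_integral_le_integral_abs hST
      _ ≤ ∫ t in S..T, (t ^ 2)⁻¹ / ω := by
          refine intervalIntegral.integral_mono_on hST ?_ (hsq.div_const ω).intervalIntegrable ?_
          · exact ((hsq.neg.mul (by fun_prop)).intervalIntegrable).abs
          · intro t _
            have h := hsin_le (-(t ^ 2)⁻¹) t
            rwa [abs_neg, abs_of_nonneg (inv_nonneg.mpr (sq_nonneg t))] at h
      _ = (S⁻¹ - T⁻¹) / ω := by rw [intervalIntegral.integral_div, hint]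
  have hend_T := hsin_le T⁻¹ T
  have hend_S := hsin_le S⁻¹ S
  rw [abs_of_pos (inv_pos.mpr (hS.trans_le hST))] at hend_T
  rw [abs_of_pos (inv_pos.mpr hS)] at hend_S
  simp_rw [div_eq_inv_mul (cos _)]
  rw [hibp, show 2 / (ω * S) = T⁻¹ / ω + S⁻¹ / ω + (S⁻¹ - T⁻¹) / ω by field_simp; ring]
  exact (abs_sub _ _).trans (add_le_add ((abs_sub _ _).trans (add_le_add hend_T hend_S)) hrem)

theorem abs_integral_cos_mul_div_sub_log_le_sq (ω : ℝ) {a b : ℝ} (ha : 0 < a) (hab : a ≤ b) :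
    |(∫ t in a..b, cos (ω * t) / t) - log (b / a)| ≤ ω ^ 2 * b ^ 2 / 2 := by
  have hpos : ∀ t ∈ uIcc a b, 0 < t := fun t ht => ha.trans_le (by simpa [hab] using ht.1)
  have hinv : ContinuousOn (fun t : ℝ => t⁻¹) (uIcc a b) :=
    continuousOn_inv₀.mono fun t ht => (hpos t ht).ne'
  have hcos : ContinuousOn (fun t => cos (ω * t) / t) (uIcc a b) :=
    (by fun_prop : Continuous fun t => cos (ω * t)).continuousOn.div continuousOn_id
      fun t ht => (hpos t ht).ne'
  rw [← integral_inv_of_pos ha (ha.trans_le hab), ← intervalIntegral.integral_sub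
    hcos.intervalIntegrable hinv.intervalIntegrable, ← Real.norm_eq_abs]
  have hbound : ∀ t ∈ uIoc a b, ‖cos (ω * t) / t - t⁻¹‖ ≤ ω ^ 2 * b / 2 := by
    intro t ht
    rw [uIoc_of_le hab] at ht
    have ht0 : 0 < t := ha.trans ht.1
    rw [Real.norm_eq_abs, inv_eq_one_div, ← sub_div, abs_div, abs_of_pos ht0, abs_sub_comm,
      abs_of_nonneg (by linarith [cos_le_one (ω * t)]), div_le_iff₀ ht0]
    calc 1 - cos (ω * t) ≤ (ω * t) ^ 2 / 2 := by linarith [one_sub_sq_div_two_le_cos (x := ω * t)]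
      _ ≤ ω ^ 2 * b / 2 * t := by
          nlinarith [mul_le_mul_of_nonneg_left ht.2 (mul_nonneg (sq_nonneg ω) ht0.le)]
  calc ‖∫ t in a..b, cos (ω * t) / t - t⁻¹‖ ≤ ω ^ 2 * b / 2 * |b - a| :=
        intervalIntegral.norm_integral_le_of_norm_le_const hbound
    _ ≤ ω ^ 2 * b ^ 2 / 2 := by
        rw [abs_of_nonneg (sub_nonneg.mpr hab)]
        nlinarith [sq_nonneg ω, mul_nonneg (sq_nonneg ω) (ha.trans_le hab).le]

theorem abs_integral_cos_mul_div_sub_log_le {ω B T : ℝ} (hω : 0 < ω) (hB : 0 < B)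
    (hBω : B ≤ ω⁻¹) (hωT : ω⁻¹ ≤ T) :
    |(∫ t in B..T, cos (ω * t) / t) - log (ω⁻¹ / B)| ≤ 5 / 2 := by
  have hS : 0 < ω⁻¹ := inv_pos.mpr hω
  have hcont : ContinuousOn (fun t => cos (ω * t) / t) (uIcc B T) :=
    (by fun_prop : Continuous fun t => cos (ω * t)).continuousOn.div continuousOn_id
      fun t ht => (hB.trans_le (by simpa [hBω.trans hωT] using ht.1)).ne'
  have hmid : ω⁻¹ ∈ uIcc B T := by rw [uIcc_of_le (hBω.trans hωT)]; exact ⟨hBω, hωT⟩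
  rw [← intervalIntegral.integral_add_adjacent_intervals
    (hcont.mono (uIcc_subset_uIcc_left hmid)).intervalIntegrable
    (hcont.mono (uIcc_subset_uIcc_right hmid)).intervalIntegrable]
  have hhead := abs_integral_cos_mul_div_sub_log_le_sq ω hB hBω
  have htail := abs_integral_cos_mul_div_le hω hS hωT
  rw [inv_pow, mul_inv_cancel₀ (pow_ne_zero 2 hω.ne')] at hhead
  rw [mul_inv_cancel₀ hω.ne'] at htail
  rw [add_sub_right_comm]
  linarith [abs_add_le ((∫ t in B..ω⁻¹, cos (ω * t) / t) - log (ω⁻¹ / B))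
    (∫ t in ω⁻¹..T, cos (ω * t) / t)]

theorem abs_integral_mul_cos_le {f : ℝ → ℝ} {a b : ℝ} (ω : ℝ) (hab : a ≤ b)
    (hf : IntervalIntegrable f volume a b) :
    |∫ t in a..b, f t * cos (ω * t)| ≤ ∫ t in a..b, |f t| :=
  (intervalIntegral.abs_integral_le_integral_abs hab).trans <|
    intervalIntegral.integral_mono_on hab
      (hf.mul_continuousOn (by fun_prop : Continuous fun t => cos (ω * t)).continuousOn).abs
      hf.abs fun t _ => by
        rw [abs_mul]
        exact mul_le_of_le_one_right (abs_nonneg _) (abs_cos_le_one _)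

theorem integral_abs_sub_div_le_of_abs_mul_sub_le {K : ℝ → ℝ} {C c β B T : ℝ} (hβ : 0 < β)
    (hB : 0 < B) (hBT : B ≤ T) (hK : IntervalIntegrable K volume B T)
    (hrate : ∀ t, B ≤ t → |t * K t - C| ≤ c * t ^ (-β)) :
    ∫ t in B..T, |K t - C / t| ≤ c * B ^ (-β) / β := by
  have hc : 0 ≤ c := nonneg_of_mul_nonneg_left ((abs_nonneg _).trans (hrate B le_rfl))
    (rpow_pos_of_pos hB _)
  have hpos : ∀ t ∈ uIcc B T, 0 < t := fun t ht => hB.trans_le (by simpa [hBT] using ht.1)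
  have hpow : ContinuousOn (fun t : ℝ => t ^ (-β - 1)) (uIcc B T) :=
    fun t ht => (continuousAt_rpow_const t _ (Or.inl (hpos t ht).ne')).continuousWithinAt
  have hdiv : ContinuousOn (fun t : ℝ => C / t) (uIcc B T) :=
    continuousOn_const.div continuousOn_id fun t ht => (hpos t ht).ne'
  calc ∫ t in B..T, |K t - C / t| ≤ ∫ t in B..T, c * t ^ (-β - 1) := by
        refine intervalIntegral.integral_mono_on hBT (hK.sub hdiv.intervalIntegrable).abs
          (hpow.const_smul c).intervalIntegrable fun t ht => ?_
        have ht0 : 0 < t := hB.trans_le ht.1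
        rw [show K t - C / t = (t * K t - C) / t by field_simp, abs_div, abs_of_pos ht0,
          div_le_iff₀ ht0, mul_assoc, ← rpow_add_one ht0.ne', sub_add_cancel]
        exact hrate t ht.1
    _ = c * (B ^ (-β) - T ^ (-β)) / β := by
        rw [intervalIntegral.integral_const_mul, integral_rpow (Or.inr ⟨by linarith,
          fun h => (hpos 0 h).false⟩), sub_add_cancel, div_neg, ← neg_div, neg_sub,
          mul_div_assoc]
    _ ≤ c * B ^ (-β) / β := by
        gcongr
        exact sub_le_self _ (rpow_nonneg (hB.le.trans hBT) _)

theorem abs_integral_mul_cos_sub_log_le {K : ℝ → ℝ} {C c β B ω T : ℝ} (hβ : 0 < β) (hB : 0 < B)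
    (hK0 : IntervalIntegrable K volume 0 B) (hK : LocallyIntegrableOn K (Ioi 0))
    (hrate : ∀ t, B ≤ t → |t * K t - C| ≤ c * t ^ (-β))
    (hω : 0 < ω) (hBω : B ≤ ω⁻¹) (hωT : ω⁻¹ ≤ T) :
    |(∫ t in 0..T, K t * cos (ω * t)) - C * log ω⁻¹|
      ≤ (∫ t in 0..B, |K t|) + c * B ^ (-β) / β + |C| * (|log B| + 5 / 2) := by
  have hBT := hBω.trans hωT
  have hpos : ∀ t ∈ uIcc B T, 0 < t := fun t ht => hB.trans_le (by simpa [hBT] using ht.1)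
  have hKBT : IntervalIntegrable K volume B T :=
    (hK.integrableOn_compact_subset hpos isCompact_uIcc).intervalIntegrable
  have hcos : ContinuousOn (fun t => cos (ω * t)) (uIcc B T) := by fun_prop
  have hdiv : ContinuousOn (fun t => C / t) (uIcc B T) :=
    continuousOn_const.div continuousOn_id fun t ht => (hpos t ht).ne'
  have hcos_div : ContinuousOn (fun t => cos (ω * t) / t) (uIcc B T) :=
    hcos.div continuousOn_id fun t ht => (hpos t ht).ne'
  have hsplit : ∫ t in 0..T, K t * cos (ω * t) = (∫ t in 0..B, K t * cos (ω * t))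
      + (∫ t in B..T, (K t - C / t) * cos (ω * t)) + C * ∫ t in B..T, cos (ω * t) / t := by
    rw [← intervalIntegral.integral_add_adjacent_intervals
      (hK0.mul_continuousOn (by fun_prop)) (hKBT.mul_continuousOn hcos), add_assoc,
      ← intervalIntegral.integral_const_mul, ← intervalIntegral.integral_add
      ((hKBT.sub hdiv.intervalIntegrable).mul_continuousOn hcos)
      (hcos_div.intervalIntegrable.const_mul C)]
    congr 1
    exact intervalIntegral.integral_congr fun t _ => by ring
  have hhead := abs_integral_mul_cos_le ω hB.le hK0
  have hrem := (abs_integral_mul_cos_le ω hBT (hKBT.sub hdiv.intervalIntegrable)).trans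
    (integral_abs_sub_div_le_of_abs_mul_sub_le hβ hB hBT hKBT hrate)
  have hmain := abs_integral_cos_mul_div_sub_log_le hω hB hBω hωT
  rw [hsplit, show log ω⁻¹ = log (ω⁻¹ / B) + log B by
    rw [log_div (inv_ne_zero hω.ne') hB.ne']; ring]
  set I := ∫ t in B..T, cos (ω * t) / t
  calc _ = |(∫ t in 0..B, K t * cos (ω * t)) + (∫ t in B..T, (K t - C / t) * cos (ω * t))
          + C * (I - log (ω⁻¹ / B)) + -(C * log B)| := by
          congr 1; ring
    _ ≤ |∫ t in 0..B, K t * cos (ω * t)| + |∫ t in B..T, (K t - C / t) * cos (ω * t)|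
          + |C| * |I - log (ω⁻¹ / B)| + |C| * |log B| := by
        rw [← abs_mul, ← abs_mul, ← abs_neg (C * log B)]
        exact (abs_add_le _ _).trans (add_le_add (abs_add_three _ _ _) le_rfl)
    _ ≤ (∫ t in 0..B, |K t|) + c * B ^ (-β) / β + |C| * (5 / 2) + |C| * |log B| := by
        gcongr
    _ = _ := by ring

theorem stmt_4_general (K : ℝ → ℝ) (C₁ β₁ : ℝ) (hβ₁ : 0 < β₁)
    (hloc : LocallyIntegrableOn K (Ioi 0))
    (hint0 : IntegrableOn K (Ioc 0 1))
    (hrate : (fun t => t * K t - C₁) =O[atTop] fun t => t ^ (-β₁))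
    (Kcos : ℝ → ℝ)
    (hKcos : ∀ ω > (0:ℝ),
      Tendsto (fun T => ∫ t in (0:ℝ)..T, K t * Real.cos (ω * t)) atTop (nhds (Kcos ω))) :
    (fun ω => Kcos ω / |Real.log ω| - C₁) =O[nhdsWithin 0 (Ioi 0)]
      fun ω => |Real.log ω|⁻¹ := by
  obtain ⟨c, hc⟩ := hrate.bound
  obtain ⟨t₀, ht₀⟩ := eventually_atTop.mp hc
  set B := max t₀ 1
  have hB1 : 1 ≤ B := le_max_right _ _
  have hB : 0 < B := one_pos.trans_le hB1
  have hrate' : ∀ t, B ≤ t → |t * K t - C₁| ≤ c * t ^ (-β₁) := fun t ht => by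
    simpa [abs_of_nonneg (rpow_nonneg (hB.le.trans ht) _)] using
      ht₀ t ((le_max_left _ _).trans ht)
  have hK0 : IntervalIntegrable K volume 0 B :=
    ((intervalIntegrable_iff_integrableOn_Ioc_of_le zero_le_one).mpr hint0).trans
      (hloc.integrableOn_compact_subset (fun t ht => one_pos.trans_le (uIcc_of_le hB1 ▸ ht).1)
        isCompact_uIcc).intervalIntegrable
  refine isBigO_iff.mpr ⟨(∫ t in 0..B, |K t|) + c * B ^ (-β₁) / β₁ + |C₁| * (|log B| + 5 / 2), ?_⟩
  filter_upwards [Ioo_mem_nhdsGT (inv_pos.mpr hB)] with ω ⟨hω, hωB⟩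
  have hBω : B ≤ ω⁻¹ := (le_inv_comm₀ hω hB).mp hωB.le
  have hlog : 0 < log ω⁻¹ :=
    log_pos (one_lt_inv₀ hω |>.mpr (hωB.trans_le (inv_le_one_of_one_le₀ hB1)))
  have hKcos_le := le_of_tendsto ((hKcos ω hω).sub_const (C₁ * log ω⁻¹)).abs
    ((eventually_ge_atTop ω⁻¹).mono fun T hT =>
      abs_integral_mul_cos_sub_log_le hβ₁ hB hK0 hloc hrate' hω hBω hT)
  rw [Real.norm_eq_abs, Real.norm_eq_abs, ← abs_neg (log ω), ← log_inv, abs_of_pos hlog,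
    abs_inv, abs_of_pos hlog, div_sub' hlog.ne', abs_div, abs_of_pos hlog, mul_comm]
  exact div_le_div_of_nonneg_right hKcos_le hlog.le

theorem stmt_4 (K : ℝ → ℝ) (C₁ β₁ : ℝ) (hC₁ : 0 < C₁) (hβ₁ : 0 < β₁)
    (hKnonneg : ∀ t ∈ Ioi (0:ℝ), 0 ≤ K t)
    (hloc : LocallyIntegrableOn K (Ioi 0))
    (hint0 : IntegrableOn K (Ioc 0 1))
    (hdec : ∃ A > (0:ℝ), AntitoneOn K (Ici A))
    (hK0 : Tendsto K atTop (nhds 0))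
    (hrate : (fun t => t * K t - C₁) =O[atTop] fun t => t ^ (-β₁))
    (Kcos : ℝ → ℝ)
    (hKcos : ∀ ω > (0:ℝ),
      Tendsto (fun T => ∫ t in (0:ℝ)..T, K t * Real.cos (ω * t)) atTop (nhds (Kcos ω))) :
    (fun ω => Kcos ω / |Real.log ω| - C₁) =O[nhdsWithin 0 (Ioi 0)]
      fun ω => |Real.log ω|⁻¹ :=
  stmt_4_general K C₁ β₁ hβ₁ hloc hint0 hrate Kcos hKcos
end

section
/- Let K : (0,∞) → [0,∞) with K ∈ L¹(0,∞) and additionally t^{β₀}·K(t) ∈ L¹(0,∞) for some β₀ > 0, and suppose K is locally integrable and decreasing to 0 at infinity. Then with γ₀ = min{β₀, 2}, one has |K_cos(ω) − K_cos(0)| ≤ c₁ ω^{γ₀} for all ω > 0, where K_cos(ω) = ∫₀^∞ K(t) cos(ωt) dt and K_cos(0) = ∫₀^∞ K(t) dt. -/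
open MeasureTheory Filter Set Real

lemma aux_cos_sub_one_le (γ : ℝ) (hγ : 0 < γ) (hγ2 : γ ≤ 2) {x : ℝ} (hx : 0 < x) :
    |Real.cos x - 1| ≤ 2 * x ^ γ := by
  have h1 : |Real.cos x - 1| = 1 - Real.cos x := by
    rw [abs_sub_comm, abs_of_nonneg]; linarith [Real.cos_le_one x]
  rw [h1]
  rcases le_or_gt 1 x with hx1 | hx1
  · have h2 : (1:ℝ) ≤ x ^ γ := Real.one_le_rpow hx1 hγ.le
    linarith [Real.neg_one_le_cos x]
  · have hsin := Real.sin_sq_le_sq (x := x / 2)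
    have hc := Real.cos_two_mul (x / 2)
    have hpy := Real.sin_sq_add_cos_sq (x / 2)
    rw [show (2:ℝ) * (x / 2) = x by ring] at hc
    have h2 : 1 - Real.cos x ≤ x ^ 2 := by nlinarith
    have h3 : x ^ (2:ℝ) ≤ x ^ γ := Real.rpow_le_rpow_of_exponent_ge hx hx1.le hγ2
    have h4 : x ^ (2:ℝ) = x ^ 2 := by
      rw [show ((2:ℝ)) = ((2:ℕ):ℝ) by norm_num, Real.rpow_natCast]
    rw [h4] at h3
    linarith [Real.rpow_nonneg hx.le γ]

theorem stmt_5 (K : ℝ → ℝ) (β₀ : ℝ) (hβ₀ : 0 < β₀)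
    (hKnonneg : ∀ t ∈ Ioi (0:ℝ), 0 ≤ K t)
    (hint : IntegrableOn K (Ioi 0))
    (hintβ : IntegrableOn (fun t => t ^ β₀ * K t) (Ioi 0))
    (hdec : ∃ A > (0:ℝ), AntitoneOn K (Ici A))
    (hK0 : Tendsto K atTop (nhds 0)) :
    ∃ c₁ > (0:ℝ), ∀ ω > (0:ℝ),
      |(∫ t in Ioi (0:ℝ), K t * Real.cos (ω * t)) - ∫ t in Ioi (0:ℝ), K t|
        ≤ c₁ * ω ^ min β₀ 2 := by
  set γ := min β₀ 2 with hγdef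
  have hγpos : 0 < γ := lt_min hβ₀ two_pos
  have hγ2 : γ ≤ 2 := min_le_right _ _
  have hγβ : γ ≤ β₀ := min_le_left _ _
  set I1 := ∫ t in Ioi (0:ℝ), K t with hI1
  set I2 := ∫ t in Ioi (0:ℝ), t ^ β₀ * K t with hI2
  have hI1nn : 0 ≤ I1 := by
    apply integral_nonneg_of_ae
    filter_upwards [ae_restrict_mem measurableSet_Ioi] with t ht
    exact hKnonneg t ht
  have hI2nn : 0 ≤ I2 := by
    apply integral_nonneg_of_ae
    filter_upwards [ae_restrict_mem measurableSet_Ioi] with t ht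
    exact mul_nonneg (Real.rpow_nonneg (le_of_lt ht) _) (hKnonneg t ht)
  refine ⟨2 * (I1 + I2) + 1, by linarith, fun ω hω => ?_⟩
  have hcosmeas : AEStronglyMeasurable (fun t => K t * Real.cos (ω * t))
      (volume.restrict (Ioi (0:ℝ))) :=
    hint.aestronglyMeasurable.mul
      ((Real.continuous_cos.comp (continuous_const.mul continuous_id)).aestronglyMeasurable)
  have hcosint : IntegrableOn (fun t => K t * Real.cos (ω * t)) (Ioi 0) := by
    apply Integrable.mono hint hcosmeas
    filter_upwards with t
    rw [Real.norm_eq_abs, Real.norm_eq_abs, abs_mul]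
    exact mul_le_of_le_one_right (abs_nonneg _) (Real.abs_cos_le_one _)
  have hsub : (∫ t in Ioi (0:ℝ), K t * Real.cos (ω * t)) - I1
      = ∫ t in Ioi (0:ℝ), K t * (Real.cos (ω * t) - 1) := by
    rw [← integral_sub hcosint hint]
    congr 1; ext t; ring
  rw [hsub]
  have hgint : IntegrableOn (fun t => 2 * ω ^ γ * (K t + t ^ β₀ * K t)) (Ioi 0) :=
    (hint.add hintβ).const_mul _
  have habs : |∫ t in Ioi (0:ℝ), K t * (Real.cos (ω * t) - 1)|
      ≤ ∫ t in Ioi (0:ℝ), 2 * ω ^ γ * (K t + t ^ β₀ * K t) := by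
    rw [← Real.norm_eq_abs]
    apply norm_integral_le_of_norm_le hgint
    filter_upwards [ae_restrict_mem measurableSet_Ioi] with t ht
    have htpos : (0:ℝ) < t := ht
    have hKt : 0 ≤ K t := hKnonneg t ht
    rw [Real.norm_eq_abs, abs_mul, abs_of_nonneg hKt]
    have hbd : |Real.cos (ω * t) - 1| ≤ 2 * (ω * t) ^ γ :=
      aux_cos_sub_one_le γ hγpos hγ2 (mul_pos hω htpos)
    have hrw : (ω * t) ^ γ = ω ^ γ * t ^ γ := Real.mul_rpow hω.le htpos.le
    have htγ : t ^ γ ≤ 1 + t ^ β₀ := by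
      rcases le_or_gt t 1 with h1 | h1
      · have := Real.rpow_le_one htpos.le h1 hγpos.le
        have := Real.rpow_nonneg htpos.le β₀
        linarith
      · have := Real.rpow_le_rpow_of_exponent_le h1.le hγβ
        linarith
    have hωγnn : 0 ≤ ω ^ γ := Real.rpow_nonneg hω.le γ
    calc K t * |Real.cos (ω * t) - 1| ≤ K t * (2 * (ω ^ γ * t ^ γ)) := by
          rw [← hrw]; exact mul_le_mul_of_nonneg_left hbd hKt
      _ = 2 * ω ^ γ * (t ^ γ * K t) := by ring
      _ ≤ 2 * ω ^ γ * ((1 + t ^ β₀) * K t) := by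
          apply mul_le_mul_of_nonneg_left _ (by positivity)
          exact mul_le_mul_of_nonneg_right htγ hKt
      _ = 2 * ω ^ γ * (K t + t ^ β₀ * K t) := by ring
  have heq : (∫ t in Ioi (0:ℝ), 2 * ω ^ γ * (K t + t ^ β₀ * K t))
      = 2 * ω ^ γ * (I1 + I2) := by
    rw [MeasureTheory.integral_const_mul, integral_add hint hintβ]
  rw [heq] at habs
  have hωγnn : 0 ≤ ω ^ γ := Real.rpow_nonneg hω.le γ
  nlinarith
end

section
/- Let K : (0,∞) → [0,∞) with K ∈ L¹(0,∞) and t^{β₀}·K(t) ∈ L¹(0,∞) for some β₀ > 0. Then with γ₀,₁ = min{β₀, 1}, one has |K_sin(ω)| ≤ c₂ ω^{γ₀,₁} for all ω > 0, where K_sin(ω) = ∫₀^∞ K(t) sin(ωt) dt. -/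
/-!
Since `|sin x| ≤ x ^ γ` for `x ≥ 0` and `0 ≤ γ ≤ 1`, the integrand is bounded by
`ω ^ γ * t ^ γ * |K t|`, and `t ^ γ ≤ 1 + t ^ β₀` for `γ ≤ β₀` makes `t ^ γ * K t` integrable.
-/

open MeasureTheory Filter Set Real

lemma abs_sin_le_rpow {γ x : ℝ} (hγ0 : 0 ≤ γ) (hγ1 : γ ≤ 1) (hx : 0 ≤ x) :
    |sin x| ≤ x ^ γ := by
  rcases hx.eq_or_lt with rfl | hx0
  · simpa using rpow_nonneg le_rfl γ
  rcases le_or_gt x 1 with hx1 | hx1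
  · calc |sin x| ≤ |x| := abs_sin_le_abs
      _ = x ^ (1 : ℝ) := by rw [abs_of_pos hx0, rpow_one]
      _ ≤ x ^ γ := rpow_le_rpow_of_exponent_ge hx0 hx1 hγ1
  · exact (abs_sin_le_one x).trans (one_le_rpow hx1.le hγ0)

lemma rpow_le_one_add_rpow {γ β t : ℝ} (hγ0 : 0 ≤ γ) (hγβ : γ ≤ β) (ht : 0 ≤ t) :
    t ^ γ ≤ 1 + t ^ β := by
  rcases le_or_gt t 1 with ht1 | ht1
  · linarith [rpow_le_one ht ht1 hγ0, rpow_nonneg ht β]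
  · linarith [rpow_le_rpow_of_exponent_le ht1.le hγβ]

lemma integrableOn_rpow_mul_of_le {K : ℝ → ℝ} {γ β : ℝ} (hγ0 : 0 ≤ γ) (hγβ : γ ≤ β)
    (hK : IntegrableOn K (Ioi 0)) (hKβ : IntegrableOn (fun t => t ^ β * K t) (Ioi 0)) :
    IntegrableOn (fun t => t ^ γ * K t) (Ioi 0) := by
  refine (hK.norm.add hKβ.norm).mono'
    ((measurable_id.pow_const γ).aestronglyMeasurable.mul hK.aestronglyMeasurable) ?_
  filter_upwards [ae_restrict_mem measurableSet_Ioi] with t ht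
  have ht0 : 0 ≤ t := le_of_lt ht
  calc ‖t ^ γ * K t‖ = t ^ γ * ‖K t‖ := by rw [norm_mul, norm_of_nonneg (rpow_nonneg ht0 γ)]
    _ ≤ (1 + t ^ β) * ‖K t‖ := by gcongr; exact rpow_le_one_add_rpow hγ0 hγβ ht0
    _ = ‖K t‖ + ‖t ^ β * K t‖ := by rw [norm_mul, norm_of_nonneg (rpow_nonneg ht0 β)]; ring

lemma abs_integral_mul_sin_le {K : ℝ → ℝ} {γ ω : ℝ} (hγ0 : 0 ≤ γ) (hγ1 : γ ≤ 1) (hω : 0 ≤ ω)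
    (hKγ : IntegrableOn (fun t => t ^ γ * K t) (Ioi 0)) :
    |∫ t in Ioi 0, K t * sin (ω * t)| ≤ ω ^ γ * ∫ t in Ioi 0, ‖t ^ γ * K t‖ := by
  rw [← integral_const_mul, ← norm_eq_abs]
  refine norm_integral_le_of_norm_le (hKγ.norm.const_mul _) ?_
  filter_upwards [ae_restrict_mem measurableSet_Ioi] with t ht
  have ht0 : 0 ≤ t := le_of_lt ht
  calc ‖K t * sin (ω * t)‖ = |K t| * |sin (ω * t)| := by rw [norm_mul, norm_eq_abs, norm_eq_abs]
    _ ≤ |K t| * (ω * t) ^ γ := by gcongr; exact abs_sin_le_rpow hγ0 hγ1 (by positivity)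
    _ = ω ^ γ * ‖t ^ γ * K t‖ := by
      rw [mul_rpow hω ht0, norm_mul, norm_eq_abs, norm_eq_abs, abs_of_nonneg (rpow_nonneg ht0 γ)]; ring

theorem stmt_6_general (K : ℝ → ℝ) (β₀ : ℝ) (hβ₀ : 0 < β₀)
    (hint : IntegrableOn K (Ioi 0))
    (hintβ : IntegrableOn (fun t => t ^ β₀ * K t) (Ioi 0)) :
    ∃ c₂ > (0:ℝ), ∀ ω > (0:ℝ),
      |∫ t in Ioi (0:ℝ), K t * Real.sin (ω * t)| ≤ c₂ * ω ^ min β₀ 1 := by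
  have hγ0 : 0 ≤ min β₀ 1 := le_min hβ₀.le zero_le_one
  set C := ∫ t in Ioi (0:ℝ), ‖t ^ min β₀ 1 * K t‖
  have hC : 0 ≤ C := integral_nonneg fun _ => norm_nonneg _
  refine ⟨C + 1, by linarith, fun ω hω => ?_⟩
  calc _ ≤ ω ^ min β₀ 1 * C := abs_integral_mul_sin_le hγ0 (min_le_right _ _) hω.le
        (integrableOn_rpow_mul_of_le hγ0 (min_le_left _ _) hint hintβ)
    _ ≤ (C + 1) * ω ^ min β₀ 1 := by
      rw [mul_comm]; exact mul_le_mul_of_nonneg_right (by linarith) (rpow_nonneg hω.le _)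

theorem stmt_6 (K : ℝ → ℝ) (β₀ : ℝ) (hβ₀ : 0 < β₀)
    (hKnonneg : ∀ t ∈ Ioi (0:ℝ), 0 ≤ K t)
    (hint : IntegrableOn K (Ioi 0))
    (hintβ : IntegrableOn (fun t => t ^ β₀ * K t) (Ioi 0)) :
    ∃ c₂ > (0:ℝ), ∀ ω > (0:ℝ),
      |∫ t in Ioi (0:ℝ), K t * Real.sin (ω * t)| ≤ c₂ * ω ^ min β₀ 1 :=
  stmt_6_general K β₀ hβ₀ hint hintβ
end

section
/- Suppose K : (0,∞) → [0,∞) is locally integrable, eventually decreasing with K(t) → 0 at infinity, and there exist α ∈ (0,1), C_α > 0, β_α > 0 with |t^α K(t) − C_α| = O(t^{-β_α}) as t → ∞. Then, with γ_α = min{1−α, α·β_α}, one has |ω^{1−α} K_sin(ω) − C_α ∫₀^∞ sin(z)/z^α dz| = O(ω^{γ_α}) as ω → 0⁺. -/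
/-!
Write `D t = K t - Cα * t ^ (-α)`. Substituting `z = ω t` in `∫ sin z / z ^ α`, the quantity
`ω ^ (1 - α) * Ksin ω - Cα * Isin` is the limit as `T → ∞` of
`ω ^ (1 - α) * ∫₀ᵀ D t * sin (ω t)`. With `θ = γ / α ≤ β`, the rate hypothesis gives
`|D t| ≤ M t ^ (-(α + θ))` for `t ≥ T₀`. Cut the integral at `T₀`, `1 / ω` and
`S = ω ^ (-(1 + θ))`: on `[0, T₀]` use `|sin (ω t)| ≤ ω t`, on `[T₀, 1 / ω]` the same bound
together with the rate, on `[1 / ω, S]` the rate alone, and beyond `S` the oscillation bound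
`|∫ₐᵇ g t * sin (ω t)| ≤ 3π / (2ω) * g a` for the nonnegative decreasing functions `K` and
`t ^ (-α)` separately. Each piece is `O(ω ^ (α θ))`.
-/

open MeasureTheory Filter Set Real Asymptotics intervalIntegral
open scoped Interval

section Oscillation

variable {g : ℝ → ℝ} {a b ω : ℝ}

theorem abs_integral_mul_sin_le_sub_mul_of_antitoneOn (hab : a ≤ b) (hg : AntitoneOn g (Icc a b))
    (hgb : 0 ≤ g b) : |∫ t in a..b, g t * sin (ω * t)| ≤ (b - a) * g a := by
  have hbound : ∀ t ∈ Ι a b, ‖g t * sin (ω * t)‖ ≤ g a := by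
    intro t ht
    rw [uIoc_of_le hab] at ht
    have ht' : t ∈ Icc a b := Ioc_subset_Icc_self ht
    have hgt : 0 ≤ g t := hgb.trans (hg ht' (right_mem_Icc.2 hab) ht.2)
    rw [norm_mul, Real.norm_of_nonneg hgt]
    exact (mul_le_of_le_one_right hgt (abs_sin_le_one _)).trans
      (hg (left_mem_Icc.2 hab) ht' ht.1.le)
  simpa [abs_of_nonneg (sub_nonneg.2 hab), mul_comm] using
    norm_integral_le_of_norm_le_const hbound

theorem abs_integral_sub_shift_mul_sin_le {h : ℝ} (hh : 0 ≤ h) (hab : a + h ≤ b)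
    (hg : AntitoneOn g (Icc a b)) :
    |∫ t in a..b - h, (g t - g (t + h)) * sin (ω * t)| ≤ h * (g a - g b) := by
  have hgi : ∀ {c d}, c ∈ Icc a b → d ∈ Icc a b → IntervalIntegrable g volume c d :=
    fun hc hd => (hg.mono (uIcc_subset_Icc hc hd)).intervalIntegrable
  have ha : a ∈ Icc a b := left_mem_Icc.2 (by linarith)
  have hb : b ∈ Icc a b := right_mem_Icc.2 (by linarith)
  have hah : a + h ∈ Icc a b := ⟨by linarith, hab⟩
  have hbh : b - h ∈ Icc a b := ⟨by linarith, by linarith⟩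
  have hshift : IntervalIntegrable (fun t => g (t + h)) volume a (b - h) := by
    simpa using (hgi hah hb).comp_add_right h
  have hdiff : IntervalIntegrable (fun t => g t - g (t + h)) volume a (b - h) :=
    (hgi ha hbh).sub hshift
  have htelescope : ∫ t in a..b - h, (g t - g (t + h)) =
      (∫ t in a..a + h, g t) - ∫ t in b - h..b, g t := by
    rw [integral_sub (hgi ha hbh) hshift, integral_comp_add_right g h, sub_add_cancel]
    exact integral_interval_sub_interval_comm (hgi ha hbh) (hgi hah hb) (hgi ha hah)
  have hleft : ∫ t in a..a + h, g t ≤ h * g a := by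
    calc ∫ t in a..a + h, g t ≤ ∫ _ in a..a + h, g a :=
          integral_mono_on (by linarith) (hgi ha hah) intervalIntegrable_const
            fun t ht => hg ha ⟨ht.1, ht.2.trans hab⟩ ht.1
      _ = h * g a := by simp
  have hright : h * g b ≤ ∫ t in b - h..b, g t := by
    calc h * g b = ∫ _ in b - h..b, g b := by simp
      _ ≤ ∫ t in b - h..b, g t :=
          integral_mono_on (by linarith) intervalIntegrable_const (hgi hbh hb)
            fun t ht => hg ⟨by linarith [ht.1, hbh.1], ht.2⟩ hb ht.2
  calc |∫ t in a..b - h, (g t - g (t + h)) * sin (ω * t)|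
      ≤ ∫ t in a..b - h, (g t - g (t + h)) := by
        rw [← Real.norm_eq_abs]
        refine norm_integral_le_of_norm_le hbh.1 (ae_of_all _ fun t ht => ?_) hdiff
        have hgt : g (t + h) ≤ g t :=
          hg ⟨ht.1.le, by linarith [ht.2]⟩ ⟨by linarith [ht.1], by linarith [ht.2]⟩
            (by linarith)
        rw [norm_mul, Real.norm_of_nonneg (sub_nonneg.2 hgt)]
        exact mul_le_of_le_one_right (sub_nonneg.2 hgt) (abs_sin_le_one _)
    _ ≤ h * (g a - g b) := by rw [htelescope]; linarith

theorem two_mul_integral_mul_sin_eq (hω : 0 < ω) (hab : a + π / ω ≤ b)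
    (hg : IntervalIntegrable g volume a b) :
    2 * ∫ t in a..b, g t * sin (ω * t) = (∫ t in a..a + π / ω, g t * sin (ω * t))
      + (∫ t in b - π / ω..b, g t * sin (ω * t))
      + ∫ t in a..b - π / ω, (g t - g (t + π / ω)) * sin (ω * t) := by
  set h := π / ω with hh_def
  have hh : 0 ≤ h := by positivity
  have hsin : Continuous fun t => sin (ω * t) := continuous_sin.comp (continuous_const_mul ω)
  have hgi : ∀ {c d}, c ∈ Icc a b → d ∈ Icc a b → IntervalIntegrable g volume c d :=
    fun hc hd => hg.mono_set (uIcc_subset_uIcc (Icc_subset_uIcc hc) (Icc_subset_uIcc hd))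
  have hgsi : ∀ {c d}, c ∈ Icc a b → d ∈ Icc a b →
      IntervalIntegrable (fun t => g t * sin (ω * t)) volume c d :=
    fun hc hd => (hgi hc hd).mul_continuousOn hsin.continuousOn
  have ha : a ∈ Icc a b := left_mem_Icc.2 (by linarith)
  have hb : b ∈ Icc a b := right_mem_Icc.2 (by linarith)
  have hah : a + h ∈ Icc a b := ⟨by linarith, hab⟩
  have hbh : b - h ∈ Icc a b := ⟨by linarith, by linarith⟩
  have hshift :
      ∫ t in a..b - h, g (t + h) * sin (ω * t) = -∫ t in a + h..b, g t * sin (ω * t) := by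
    rw [← sub_add_cancel b h, ← integral_comp_add_right, ← intervalIntegral.integral_neg,
      add_sub_cancel_right]
    refine integral_congr fun t _ => ?_
    rw [mul_add, hh_def, mul_div_cancel₀ _ hω.ne', sin_add_pi, mul_neg, neg_neg]
  have hsub : ∫ t in a..b - h, (g t - g (t + h)) * sin (ω * t) =
      (∫ t in a..b - h, g t * sin (ω * t)) - ∫ t in a..b - h, g (t + h) * sin (ω * t) := by
    have hshifti : IntervalIntegrable (fun t => g (t + h)) volume a (b - h) := by
      simpa using (hgi hah hb).comp_add_right h
    rw [← integral_sub (hgsi ha hbh) (hshifti.mul_continuousOn hsin.continuousOn)]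
    simp only [sub_mul]
  have hsplit_left := integral_add_adjacent_intervals (hgsi ha hah) (hgsi hah hb)
  have hsplit_right := integral_add_adjacent_intervals (hgsi ha hbh) (hgsi hbh hb)
  rw [hsub, hshift]
  linarith

theorem abs_integral_mul_sin_le_of_antitoneOn (hω : 0 < ω) (hab : a ≤ b)
    (hg : AntitoneOn g (Icc a b)) (hgb : 0 ≤ g b) :
    |∫ t in a..b, g t * sin (ω * t)| ≤ 3 * π / (2 * ω) * g a := by
  have hh : 0 < π / ω := div_pos pi_pos hω
  have hgba : g b ≤ g a := hg (left_mem_Icc.2 hab) (right_mem_Icc.2 hab) hab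
  have hshort : ∀ {c d}, a ≤ c → c ≤ d → d ≤ b →
      |∫ t in c..d, g t * sin (ω * t)| ≤ (d - c) * g a := fun hac hcd hdb =>
    (abs_integral_mul_sin_le_sub_mul_of_antitoneOn hcd (hg.mono (Icc_subset_Icc hac hdb))
      (hgb.trans (hg ⟨hac.trans hcd, hdb⟩ (right_mem_Icc.2 hab) hdb))).trans
      (mul_le_mul_of_nonneg_left (hg (left_mem_Icc.2 hab) ⟨hac, hcd.trans hdb⟩ hac)
        (sub_nonneg.2 hcd))
  have hconst : 3 * π / (2 * ω) * g a = 3 / 2 * (π / ω * g a) := by ring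
  rw [hconst]
  rcases le_or_gt b (a + π / ω) with hb | hb
  · exact (hshort le_rfl hab le_rfl).trans (by nlinarith [hgb.trans hgba])
  have hleft := hshort le_rfl (by linarith) hb.le
  have hright := hshort (c := b - π / ω) (by linarith) (by linarith) le_rfl
  have hmid := abs_integral_sub_shift_mul_sin_le (ω := ω) hh.le hb.le hg
  have habs : |2 * ∫ t in a..b, g t * sin (ω * t)| ≤ 3 * (π / ω * g a) := by
    rw [two_mul_integral_mul_sin_eq hω hb.le
      (AntitoneOn.intervalIntegrable (by rwa [uIcc_of_le hab]))]
    refine (abs_add_three _ _ _).trans ?_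
    simp only [add_sub_cancel_left, sub_sub_cancel] at hleft hright
    nlinarith [hgb]
  rw [abs_mul, abs_two] at habs
  linarith

end Oscillation

theorem abs_integral_le_of_abs_le_mul_rpow {f : ℝ → ℝ} {a b c q : ℝ} (ha : 0 ≤ a) (hab : a ≤ b)
    (hq : -1 < q) (hc : 0 ≤ c) (hf : ∀ t ∈ Ioc a b, |f t| ≤ c * t ^ q) :
    |∫ t in a..b, f t| ≤ c * b ^ (q + 1) / (q + 1) := by
  have hq1 : 0 < q + 1 := by linarith
  calc |∫ t in a..b, f t| ≤ ∫ t in a..b, c * t ^ q := by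
        rw [← Real.norm_eq_abs]
        exact norm_integral_le_of_norm_le hab (ae_of_all _ hf)
          ((intervalIntegrable_rpow' hq).const_mul c)
    _ = c * ((b ^ (q + 1) - a ^ (q + 1)) / (q + 1)) := by
        rw [intervalIntegral.integral_const_mul, integral_rpow (Or.inl hq)]
    _ ≤ c * b ^ (q + 1) / (q + 1) := by
        rw [mul_div_assoc]
        gcongr
        linarith [rpow_nonneg ha (q + 1)]

theorem abs_integral_mul_sin_le_mul_integral_abs {g : ℝ → ℝ} {ω T : ℝ} (hω : 0 ≤ ω) (hT : 0 ≤ T)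
    (hg : IntervalIntegrable g volume 0 T) :
    |∫ t in 0..T, g t * sin (ω * t)| ≤ ω * T * ∫ t in 0..T, |g t| := by
  rw [← intervalIntegral.integral_const_mul, ← Real.norm_eq_abs]
  refine norm_integral_le_of_norm_le hT (ae_of_all _ fun t ht => ?_) (hg.abs.const_mul _)
  have hsin : |sin (ω * t)| ≤ ω * T :=
    abs_sin_le_abs.trans (by rw [abs_of_nonneg (by nlinarith [ht.1])]; nlinarith [ht.2])
  rw [norm_mul, Real.norm_eq_abs, mul_comm]
  exact mul_le_mul_of_nonneg_right hsin (abs_nonneg _)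

theorem rpow_mul_integral_rpow_neg_mul_sin {α ω T : ℝ} (hω : 0 < ω) (hT : 0 ≤ T) :
    ω ^ (1 - α) * ∫ t in 0..T, t ^ (-α) * sin (ω * t) = ∫ z in 0..ω * T, sin z / z ^ α := by
  have hsubst := intervalIntegral.integral_comp_mul_left (fun z => sin z / z ^ α) hω.ne'
    (a := 0) (b := T)
  rw [mul_zero, smul_eq_mul, eq_inv_mul_iff_mul_eq₀ hω.ne'] at hsubst
  rw [← hsubst, sub_eq_add_neg, rpow_add hω, rpow_one, mul_assoc,
    ← intervalIntegral.integral_const_mul]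
  congr 1
  refine integral_congr fun t ht => ?_
  rw [uIcc_of_le hT] at ht
  rw [mul_rpow hω.le ht.1, rpow_neg hω.le, rpow_neg ht.1, div_eq_mul_inv, mul_inv]
  ring

theorem integral_sub_rpow_mul_sin {K : ℝ → ℝ} {α Cα ω a b : ℝ}
    (hK : IntervalIntegrable K volume a b)
    (hpow : IntervalIntegrable (fun t => t ^ (-α)) volume a b) :
    ∫ t in a..b, (K t - Cα * t ^ (-α)) * sin (ω * t) =
      (∫ t in a..b, K t * sin (ω * t)) - Cα * ∫ t in a..b, t ^ (-α) * sin (ω * t) := by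
  have hsin : ContinuousOn (fun t => sin (ω * t)) (uIcc a b) :=
    (continuous_sin.comp (continuous_const_mul ω)).continuousOn
  rw [← intervalIntegral.integral_const_mul, ← intervalIntegral.integral_sub
    (hK.mul_continuousOn hsin) ((hpow.mul_continuousOn hsin).const_mul Cα)]
  simp only [sub_mul, mul_assoc]

theorem tendsto_rpow_mul_integral_sub_rpow_mul_sin {K : ℝ → ℝ} {α Cα ω L I : ℝ} (hα : α < 1)
    (hω : 0 < ω) (hK : ∀ T, 0 ≤ T → IntervalIntegrable K volume 0 T)
    (hKsin : Tendsto (fun T => ∫ t in 0..T, K t * sin (ω * t)) atTop (nhds L))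
    (hI : Tendsto (fun T => ∫ z in 0..T, sin z / z ^ α) atTop (nhds I)) :
    Tendsto (fun T => ω ^ (1 - α) * ∫ t in 0..T, (K t - Cα * t ^ (-α)) * sin (ω * t)) atTop
      (nhds (ω ^ (1 - α) * L - Cα * I)) := by
  have hpow : Tendsto (fun T => ω ^ (1 - α) * ∫ t in 0..T, t ^ (-α) * sin (ω * t)) atTop
      (nhds I) := by
    refine (hI.comp (tendsto_id.const_mul_atTop hω)).congr' ?_
    filter_upwards [eventually_ge_atTop 0] with T hT
    exact (rpow_mul_integral_rpow_neg_mul_sin hω hT).symm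
  refine ((hKsin.const_mul _).sub (hpow.const_mul Cα)).congr' ?_
  filter_upwards [eventually_ge_atTop 0] with T hT
  rw [integral_sub_rpow_mul_sin (hK T hT) (intervalIntegrable_rpow' (by linarith))]
  ring

theorem abs_integral_le_add_add_add {f : ℝ → ℝ} {a b c d e : ℝ}
    (hab : IntervalIntegrable f volume a b) (hbc : IntervalIntegrable f volume b c)
    (hcd : IntervalIntegrable f volume c d) (hde : IntervalIntegrable f volume d e) :
    |∫ t in a..e, f t| ≤
      |∫ t in a..b, f t| + |∫ t in b..c, f t| + |∫ t in c..d, f t| + |∫ t in d..e, f t| := by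
  rw [← integral_add_adjacent_intervals ((hab.trans hbc).trans hcd) hde,
    ← integral_add_adjacent_intervals (hab.trans hbc) hcd, ← integral_add_adjacent_intervals hab hbc]
  exact (abs_add_le _ _).trans (add_le_add_left (abs_add_three _ _ _) _)

section Regions

variable {g : ℝ → ℝ} {α θ M ω : ℝ}

theorem rpow_mul_abs_integral_zero_mul_sin_le {T₀ γ : ℝ} (hω : 0 < ω) (hω1 : ω ≤ 1)
    (hT₀ : 0 ≤ T₀) (hγ : γ ≤ 2 - α) (hg : IntervalIntegrable g volume 0 T₀) :
    ω ^ (1 - α) * |∫ t in 0..T₀, g t * sin (ω * t)| ≤ T₀ * (∫ t in 0..T₀, |g t|) * ω ^ γ := by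
  have hI : 0 ≤ ∫ t in 0..T₀, |g t| := integral_nonneg hT₀ fun _ _ => abs_nonneg _
  calc ω ^ (1 - α) * |∫ t in 0..T₀, g t * sin (ω * t)|
      ≤ ω ^ (1 - α) * (ω * T₀ * ∫ t in 0..T₀, |g t|) := by
        gcongr
        exact abs_integral_mul_sin_le_mul_integral_abs hω.le hT₀ hg
    _ = T₀ * (∫ t in 0..T₀, |g t|) * ω ^ (1 - α + 1) := by rw [rpow_add_one hω.ne']; ring
    _ ≤ T₀ * (∫ t in 0..T₀, |g t|) * ω ^ γ :=
        mul_le_mul_of_nonneg_left (rpow_le_rpow_of_exponent_ge hω hω1 (by linarith))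
          (by positivity)

theorem rpow_mul_abs_integral_mul_sin_le_of_le_inv {T₀ : ℝ} (hω : 0 < ω) (hT₀ : 1 ≤ T₀)
    (hT₀ω : T₀ ≤ ω⁻¹) (hα : α ≤ 1) (hθ : 0 ≤ θ) (hαθ : α * θ ≤ 1 - α) (hM : 0 ≤ M)
    (hg : ∀ t ∈ Ioc T₀ ω⁻¹, |g t| ≤ M * t ^ (-(α + θ))) :
    ω ^ (1 - α) * |∫ t in T₀..ω⁻¹, g t * sin (ω * t)| ≤ M / (2 - α - α * θ) * ω ^ (α * θ) := by
  have hbound : ∀ t ∈ Ioc T₀ ω⁻¹, |g t * sin (ω * t)| ≤ M * ω * t ^ (1 - α - α * θ) := by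
    intro t ht
    have ht1 : 1 ≤ t := hT₀.trans ht.1.le
    have ht0 : 0 < t := by linarith
    calc |g t * sin (ω * t)| ≤ M * t ^ (-(α + θ)) * (ω * t) := by
          rw [abs_mul]
          exact mul_le_mul (hg t ht) (abs_sin_le_abs.trans_eq (abs_of_pos (by positivity)))
            (abs_nonneg _) (by positivity)
      _ = M * ω * t ^ (-(α + θ) + 1) := by rw [rpow_add_one ht0.ne']; ring
      _ ≤ M * ω * t ^ (1 - α - α * θ) :=
          mul_le_mul_of_nonneg_left (rpow_le_rpow_of_exponent_le ht1 (by nlinarith))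
            (by positivity)
  have hint := abs_integral_le_of_abs_le_mul_rpow (by linarith) hT₀ω (by linarith)
    (by positivity) hbound
  have hexp : ω ^ (1 - α) * ω * ω⁻¹ ^ (1 - α - α * θ + 1) = ω ^ (α * θ) := by
    rw [inv_rpow hω.le, ← rpow_neg hω.le, ← rpow_add_one hω.ne', ← rpow_add hω]
    congr 1
    ring
  calc ω ^ (1 - α) * |∫ t in T₀..ω⁻¹, g t * sin (ω * t)|
      ≤ ω ^ (1 - α) * (M * ω * ω⁻¹ ^ (1 - α - α * θ + 1) / (1 - α - α * θ + 1)) := by gcongr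
    _ = M / (2 - α - α * θ) * ω ^ (α * θ) := by rw [← hexp]; ring

theorem rpow_mul_abs_integral_mul_sin_le_of_inv_le (hω : 0 < ω) (hω1 : ω ≤ 1) (hα : α < 1)
    (hθ : 0 ≤ θ) (hM : 0 ≤ M)
    (hg : ∀ t ∈ Ioc ω⁻¹ (ω ^ (-(1 + θ))), |g t| ≤ M * t ^ (-(α + θ))) :
    ω ^ (1 - α) * |∫ t in ω⁻¹..ω ^ (-(1 + θ)), g t * sin (ω * t)| ≤
      M / (1 - α) * ω ^ (α * θ) := by
  have hWS : ω⁻¹ ≤ ω ^ (-(1 + θ)) := by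
    rw [← rpow_neg_one]
    exact rpow_le_rpow_of_exponent_ge hω hω1 (by linarith)
  have hbound :
      ∀ t ∈ Ioc ω⁻¹ (ω ^ (-(1 + θ))), |g t * sin (ω * t)| ≤ M * ω ^ θ * t ^ (-α) := by
    intro t ht
    have ht0 : 0 < t := (inv_pos.2 hω).trans ht.1
    have htθ : t ^ (-θ) ≤ ω ^ θ := by
      simpa [inv_rpow hω.le, rpow_neg hω.le] using
        rpow_le_rpow_of_nonpos (inv_pos.2 hω) ht.1.le (neg_nonpos.2 hθ)
    calc |g t * sin (ω * t)| ≤ M * t ^ (-(α + θ)) := by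
          rw [abs_mul]
          exact (mul_le_of_le_one_right (abs_nonneg _) (abs_sin_le_one _)).trans (hg t ht)
      _ = M * t ^ (-θ) * t ^ (-α) := by rw [mul_assoc, ← rpow_add ht0]; ring_nf
      _ ≤ M * ω ^ θ * t ^ (-α) := by gcongr
  have hint := abs_integral_le_of_abs_le_mul_rpow (by positivity) hWS (by linarith)
    (by positivity) hbound
  have hexp : ω ^ (1 - α) * ω ^ θ * (ω ^ (-(1 + θ))) ^ (-α + 1) = ω ^ (α * θ) := by
    rw [← rpow_mul hω.le, ← rpow_add hω, ← rpow_add hω]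
    congr 1
    ring
  calc ω ^ (1 - α) * |∫ t in ω⁻¹..ω ^ (-(1 + θ)), g t * sin (ω * t)|
      ≤ ω ^ (1 - α) * (M * ω ^ θ * (ω ^ (-(1 + θ))) ^ (-α + 1) / (-α + 1)) := by gcongr
    _ = M / (1 - α) * ω ^ (α * θ) := by rw [← hexp]; ring

end Regions

theorem abs_integral_sub_rpow_mul_sin_le {K : ℝ → ℝ} {α Cα ω S T : ℝ} (hω : 0 < ω) (hα : 0 ≤ α)
    (hS : 0 < S) (hST : S ≤ T) (hK : AntitoneOn K (Icc S T)) (hKT : 0 ≤ K T) :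
    |∫ t in S..T, (K t - Cα * t ^ (-α)) * sin (ω * t)| ≤
      3 * π / (2 * ω) * (K S + |Cα| * S ^ (-α)) := by
  have hpow : AntitoneOn (fun t => t ^ (-α)) (Icc S T) := fun x hx y _ hxy =>
    rpow_le_rpow_of_nonpos (hS.trans_le hx.1) hxy (neg_nonpos.2 hα)
  rw [integral_sub_rpow_mul_sin (AntitoneOn.intervalIntegrable (by rwa [uIcc_of_le hST]))
    (AntitoneOn.intervalIntegrable (by rwa [uIcc_of_le hST]))]
  calc |(∫ t in S..T, K t * sin (ω * t)) - Cα * ∫ t in S..T, t ^ (-α) * sin (ω * t)|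
      ≤ |∫ t in S..T, K t * sin (ω * t)| + |Cα| * |∫ t in S..T, t ^ (-α) * sin (ω * t)| := by
        rw [← abs_mul]
        exact abs_sub _ _
    _ ≤ 3 * π / (2 * ω) * K S + |Cα| * (3 * π / (2 * ω) * S ^ (-α)) := by
        gcongr
        · exact abs_integral_mul_sin_le_of_antitoneOn hω hST hK hKT
        · exact abs_integral_mul_sin_le_of_antitoneOn hω hST hpow
            (rpow_nonneg (hS.le.trans hST) _)
    _ = 3 * π / (2 * ω) * (K S + |Cα| * S ^ (-α)) := by ring

theorem rpow_mul_abs_integral_sub_rpow_mul_sin_le {K : ℝ → ℝ} {α θ Cα M ω T : ℝ} (hω : 0 < ω)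
    (hω1 : ω ≤ 1) (hα : 0 ≤ α) (hθ : 0 ≤ θ) (hM : 0 ≤ M) (hT : ω ^ (-(1 + θ)) ≤ T)
    (hK : AntitoneOn K (Icc (ω ^ (-(1 + θ))) T)) (hKT : 0 ≤ K T)
    (hD : |K (ω ^ (-(1 + θ))) - Cα * (ω ^ (-(1 + θ))) ^ (-α)| ≤
      M * (ω ^ (-(1 + θ))) ^ (-(α + θ))) :
    ω ^ (1 - α) * |∫ t in ω ^ (-(1 + θ))..T, (K t - Cα * t ^ (-α)) * sin (ω * t)| ≤
      3 * π / 2 * (2 * |Cα| + M) * ω ^ (α * θ) := by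
  set S := ω ^ (-(1 + θ)) with hS_def
  have hS1 : 1 ≤ S := one_le_rpow_of_pos_of_le_one_of_nonpos hω hω1 (by linarith)
  have hKS : K S + |Cα| * S ^ (-α) ≤ (2 * |Cα| + M) * S ^ (-α) := by
    have hSθ : S ^ (-(α + θ)) ≤ S ^ (-α) := rpow_le_rpow_of_exponent_le hS1 (by linarith)
    have hCα : Cα * S ^ (-α) ≤ |Cα| * S ^ (-α) :=
      mul_le_mul_of_nonneg_right (le_abs_self _) (rpow_nonneg (by linarith) _)
    nlinarith [(abs_le.1 hD).2]
  have hexp : ω ^ (1 - α) * ω ^ (-1 : ℝ) * S ^ (-α) = ω ^ (α * θ) := by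
    rw [hS_def, ← rpow_mul hω.le, ← rpow_add hω, ← rpow_add hω]
    congr 1
    ring
  calc ω ^ (1 - α) * |∫ t in S..T, (K t - Cα * t ^ (-α)) * sin (ω * t)|
      ≤ ω ^ (1 - α) * (3 * π / (2 * ω) * (K S + |Cα| * S ^ (-α))) := by
        gcongr
        exact abs_integral_sub_rpow_mul_sin_le hω hα (by linarith) hT hK hKT
    _ ≤ ω ^ (1 - α) * (3 * π / (2 * ω) * ((2 * |Cα| + M) * S ^ (-α))) := by gcongr
    _ = 3 * π / 2 * (2 * |Cα| + M) * ω ^ (α * θ) := by rw [← hexp, rpow_neg_one]; ring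

theorem exists_rpow_mul_abs_integral_sub_rpow_mul_sin_le {K : ℝ → ℝ} {α θ Cα M T₀ : ℝ}
    (hα : α ∈ Ioo 0 1) (hθ : 0 ≤ θ) (hαθ : α * θ ≤ 1 - α) (hM : 0 ≤ M) (hT₀ : 1 ≤ T₀)
    (hK : ∀ T, 0 ≤ T → IntervalIntegrable K volume 0 T) (hanti : AntitoneOn K (Ici T₀))
    (hKnn : ∀ t ≥ T₀, 0 ≤ K t) (hD : ∀ t ≥ T₀, |K t - Cα * t ^ (-α)| ≤ M * t ^ (-(α + θ))) :
    ∃ C, ∀ ω ∈ Ioo 0 T₀⁻¹, ∀ T ≥ ω ^ (-(1 + θ)),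
      ω ^ (1 - α) * |∫ t in 0..T, (K t - Cα * t ^ (-α)) * sin (ω * t)| ≤ C * ω ^ (α * θ) := by
  obtain ⟨hα0, hα1⟩ := hα
  refine ⟨T₀ * (∫ t in 0..T₀, |K t - Cα * t ^ (-α)|) + M / (2 - α - α * θ) + M / (1 - α)
    + 3 * π / 2 * (2 * |Cα| + M), fun ω ⟨hω, hωT₀⟩ T hT => ?_⟩
  have hT₀0 : 0 < T₀ := by linarith
  have hT₀ω : T₀ ≤ ω⁻¹ := (le_inv_comm₀ hT₀0 hω).2 hωT₀.le
  have hω1 : ω ≤ 1 := hωT₀.le.trans (inv_le_one_of_one_le₀ hT₀)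
  set S := ω ^ (-(1 + θ))
  have hWS : ω⁻¹ ≤ S := by
    rw [← rpow_neg_one]
    exact rpow_le_rpow_of_exponent_ge hω hω1 (by linarith)
  have hDi : ∀ {a b : ℝ}, 0 ≤ a → 0 ≤ b →
      IntervalIntegrable (fun t => K t - Cα * t ^ (-α)) volume a b := fun ha hb =>
    ((hK _ ha).symm.trans (hK _ hb)).sub ((intervalIntegrable_rpow' (by linarith)).const_mul Cα)
  have hfi : ∀ {a b : ℝ}, 0 ≤ a → 0 ≤ b →
      IntervalIntegrable (fun t => (K t - Cα * t ^ (-α)) * sin (ω * t)) volume a b :=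
    fun ha hb =>
      (hDi ha hb).mul_continuousOn (continuous_sin.comp (continuous_const_mul ω)).continuousOn
  have hD' : ∀ {a b : ℝ}, T₀ ≤ a → ∀ t ∈ Ioc a b, |K t - Cα * t ^ (-α)| ≤ M * t ^ (-(α + θ)) :=
    fun ha t ht => hD t (ha.trans ht.1.le)
  have hsplit := abs_integral_le_add_add_add (b := T₀) (c := ω⁻¹) (d := S) (hfi le_rfl hT₀0.le)
    (hfi hT₀0.le (by positivity)) (hfi (by positivity) (by positivity))
    (hfi (by positivity) ((rpow_pos_of_pos hω _).le.trans hT))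
  have h₁ := rpow_mul_abs_integral_zero_mul_sin_le (α := α) (γ := α * θ) hω hω1 hT₀0.le
    (by linarith) (hDi le_rfl hT₀0.le)
  have h₂ := rpow_mul_abs_integral_mul_sin_le_of_le_inv hω hT₀ hT₀ω hα1.le hθ hαθ hM (hD' le_rfl)
  have h₃ := rpow_mul_abs_integral_mul_sin_le_of_inv_le hω hω1 hα1 hθ hM (hD' hT₀ω)
  have h₄ := rpow_mul_abs_integral_sub_rpow_mul_sin_le hω hω1 hα0.le hθ hM hT
    (hanti.mono (Icc_subset_Ici_self.trans (Ici_subset_Ici.2 (hT₀ω.trans hWS))))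
    (hKnn T (hT₀ω.trans (hWS.trans hT))) (hD S (hT₀ω.trans hWS))
  have hsplit' := mul_le_mul_of_nonneg_left hsplit (rpow_nonneg hω.le (1 - α))
  simp only [mul_add] at hsplit'
  linarith

theorem isBigO_sub_rpow_of_isBigO_rpow_mul_sub {K : ℝ → ℝ} {α β θ Cα : ℝ} (hθβ : θ ≤ β)
    (h : (fun t => t ^ α * K t - Cα) =O[atTop] fun t => t ^ (-β)) :
    (fun t => K t - Cα * t ^ (-α)) =O[atTop] fun t => t ^ (-(α + θ)) := by
  have hmul :
      (fun t => t ^ (-α) * (t ^ α * K t - Cα)) =O[atTop] fun t => t ^ (-α) * t ^ (-β) :=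
    (isBigO_refl _ _).mul h
  refine (hmul.congr' (g₂ := fun t => t ^ (-(α + β))) ?_ ?_).trans
    (IsBigO.of_bound 1 ?_)
  · filter_upwards [eventually_gt_atTop 0] with t ht
    rw [mul_sub, ← mul_assoc, ← rpow_add ht, neg_add_cancel, rpow_zero, one_mul, mul_comm]
  · filter_upwards [eventually_gt_atTop 0] with t ht
    rw [← rpow_add ht, neg_add]
  · filter_upwards [eventually_ge_atTop 1] with t ht
    rw [one_mul, Real.norm_of_nonneg (rpow_nonneg (by linarith) _),
      Real.norm_of_nonneg (rpow_nonneg (by linarith) _)]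
    exact rpow_le_rpow_of_exponent_le ht (by linarith)

theorem intervalIntegrable_of_integrableOn_Ioc_zero_one {K : ℝ → ℝ}
    (hloc : LocallyIntegrableOn K (Ioi 0)) (h01 : IntegrableOn K (Ioc 0 1)) {T : ℝ} (hT : 0 ≤ T) :
    IntervalIntegrable K volume 0 T := by
  rw [intervalIntegrable_iff_integrableOn_Ioc_of_le hT]
  refine (h01.union (hloc.integrableOn_compact_subset (fun x hx => ?_)
    (isCompact_Icc (a := 1) (b := T)))).mono_set fun x hx => ?_
  · exact zero_lt_one.trans_le hx.1
  · rcases le_or_gt x 1 with hx1 | hx1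
    exacts [Or.inl ⟨hx.1, hx1⟩, Or.inr ⟨hx1.le, hx.2⟩]

theorem isBigO_rpow_mul_sub_nhdsGT_zero {K : ℝ → ℝ} {α θ Cα A : ℝ} (hα : α ∈ Ioo 0 1)
    (hθ : 0 ≤ θ) (hαθ : α * θ ≤ 1 - α) (hK : ∀ T, 0 ≤ T → IntervalIntegrable K volume 0 T)
    (hKnn : ∀ t ∈ Ioi (0 : ℝ), 0 ≤ K t) (hanti : AntitoneOn K (Ici A))
    (hD : (fun t => K t - Cα * t ^ (-α)) =O[atTop] fun t => t ^ (-(α + θ))) {Ksin : ℝ → ℝ}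
    (hKsin : ∀ ω > (0 : ℝ),
      Tendsto (fun T => ∫ t in (0 : ℝ)..T, K t * sin (ω * t)) atTop (nhds (Ksin ω)))
    {Isin : ℝ} (hIsin : Tendsto (fun T => ∫ z in (0 : ℝ)..T, sin z / z ^ α) atTop (nhds Isin)) :
    (fun ω => ω ^ (1 - α) * Ksin ω - Cα * Isin) =O[nhdsWithin 0 (Ioi 0)]
      fun ω => ω ^ (α * θ) := by
  obtain ⟨M, hM, hMD⟩ := hD.exists_nonneg
  obtain ⟨T₁, hT₁⟩ := eventually_atTop.1 (hMD.bound.and (eventually_gt_atTop 0))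
  set T₀ := max (max T₁ A) 1
  have hT₀ : 1 ≤ T₀ := le_max_right _ _
  have hD' : ∀ t ≥ T₀, |K t - Cα * t ^ (-α)| ≤ M * t ^ (-(α + θ)) := fun t ht => by
    obtain ⟨hbound, ht0⟩ := hT₁ t (((le_max_left _ _).trans (le_max_left _ _)).trans ht)
    simpa [abs_of_pos (rpow_pos_of_pos ht0 _)] using hbound
  obtain ⟨C, hC⟩ := exists_rpow_mul_abs_integral_sub_rpow_mul_sin_le hα hθ hαθ hM hT₀ hK
    (hanti.mono (Ici_subset_Ici.2 ((le_max_right _ _).trans (le_max_left _ _))))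
    (fun t ht => hKnn t (by simp only [mem_Ioi]; linarith)) hD'
  refine isBigO_iff.2 ⟨C, ?_⟩
  filter_upwards [Ioo_mem_nhdsGT (inv_pos.2 (by linarith : (0 : ℝ) < T₀))] with ω hω
  rw [Real.norm_of_nonneg (rpow_nonneg hω.1.le _)]
  refine le_of_tendsto
    (tendsto_rpow_mul_integral_sub_rpow_mul_sin hα.2 hω.1 hK (hKsin ω hω.1) hIsin).norm ?_
  filter_upwards [eventually_ge_atTop (ω ^ (-(1 + θ)))] with T hT
  rw [norm_mul, Real.norm_of_nonneg (rpow_nonneg hω.1.le _)]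
  exact hC ω hω T hT

theorem stmt_9_general (K : ℝ → ℝ) (α Cα βα : ℝ)
    (hα : α ∈ Ioo (0:ℝ) 1) (hβα : 0 < βα)
    (hKnonneg : ∀ t ∈ Ioi (0:ℝ), 0 ≤ K t)
    (hloc : LocallyIntegrableOn K (Ioi 0))
    (hint0 : IntegrableOn K (Ioc 0 1))
    (hdec : ∃ A > (0:ℝ), AntitoneOn K (Ici A))
    (hrate : (fun t => t ^ α * K t - Cα) =O[atTop] fun t => t ^ (-βα))
    (Ksin : ℝ → ℝ)
    (hKsin : ∀ ω > (0:ℝ),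
      Tendsto (fun T => ∫ t in (0:ℝ)..T, K t * Real.sin (ω * t)) atTop (nhds (Ksin ω)))
    (Isin : ℝ)
    (hIsin : Tendsto (fun T => ∫ z in (0:ℝ)..T, Real.sin z / z ^ α) atTop (nhds Isin)) :
    (fun ω => ω ^ (1 - α) * Ksin ω - Cα * Isin) =O[nhdsWithin 0 (Ioi 0)]
      fun ω => ω ^ min (1 - α) (α * βα) := by
  obtain ⟨A, -, hanti⟩ := hdec
  set θ := min βα ((1 - α) / α)
  have hθ : 0 ≤ θ := le_min hβα.le (div_nonneg (by linarith [hα.2]) hα.1.le)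
  have hγ : α * θ = min (1 - α) (α * βα) := by
    rw [mul_min_of_nonneg _ _ hα.1.le, mul_div_cancel₀ _ hα.1.ne', min_comm]
  rw [← hγ]
  exact isBigO_rpow_mul_sub_nhdsGT_zero hα hθ (hγ ▸ min_le_left _ _)
    (fun _ hT => intervalIntegrable_of_integrableOn_Ioc_zero_one hloc hint0 hT) hKnonneg hanti
    (isBigO_sub_rpow_of_isBigO_rpow_mul_sub (min_le_left _ _) hrate) hKsin hIsin

theorem stmt_9 (K : ℝ → ℝ) (α Cα βα : ℝ)
    (hα : α ∈ Ioo (0:ℝ) 1) (hCα : 0 < Cα) (hβα : 0 < βα)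
    (hKnonneg : ∀ t ∈ Ioi (0:ℝ), 0 ≤ K t)
    (hloc : LocallyIntegrableOn K (Ioi 0))
    (hint0 : IntegrableOn K (Ioc 0 1))
    (hdec : ∃ A > (0:ℝ), AntitoneOn K (Ici A))
    (hK0 : Tendsto K atTop (nhds 0))
    (hrate : (fun t => t ^ α * K t - Cα) =O[atTop] fun t => t ^ (-βα))
    (Ksin : ℝ → ℝ)
    (hKsin : ∀ ω > (0:ℝ),
      Tendsto (fun T => ∫ t in (0:ℝ)..T, K t * Real.sin (ω * t)) atTop (nhds (Ksin ω)))
    (Isin : ℝ)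
    (hIsin : Tendsto (fun T => ∫ z in (0:ℝ)..T, Real.sin z / z ^ α) atTop (nhds Isin)) :
    (fun ω => ω ^ (1 - α) * Ksin ω - Cα * Isin) =O[nhdsWithin 0 (Ioi 0)]
      fun ω => ω ^ min (1 - α) (α * βα) :=
  stmt_9_general K α Cα βα hα hβα hKnonneg hloc hint0 hdec hrate Ksin hKsin Isin hIsin
end

section
/- The improper integral ∫₀^∞ (1 − cos z)/z² dz equals π/2. -/
/-!
Write `1 / z² = ∫₀^∞ t e^{-zt} dt` and exchange the order of integration, which is legitimate
because the integrand `t e^{-tz} (1 - cos z)` is nonnegative. For fixed `t` the inner integral is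
`t` times the Laplace transform of `1 - cos`, namely `t (1/t - t/(1+t²)) = 1/(1+t²)`, obtained as the
real part of two complex exponential integrals; finally `∫₀^∞ dt/(1+t²) = π/2`.
-/

open MeasureTheory Set Real

lemma integral_mul_exp_neg_mul_Ioi {r : ℝ} (hr : 0 < r) :
    ∫ t in Ioi (0:ℝ), t * exp (-(r * t)) = 1 / r ^ 2 := by
  have h := integral_rpow_mul_exp_neg_mul_Ioi two_pos hr
  norm_num [Gamma_two] at h
  rw [h, one_div]

lemma re_exp_sub_exp_mul_I (t z : ℝ) :
    (Complex.exp (↑(-t) * z) - Complex.exp ((-t + Complex.I) * z)).re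
      = exp (-(t * z)) * (1 - cos z) := by
  rw [Complex.sub_re, Complex.exp_re, Complex.exp_re]
  simp
  ring

lemma integrableOn_exp_sub_exp_mul_I {t : ℝ} (ht : 0 < t) :
    IntegrableOn (fun z : ℝ => Complex.exp (↑(-t) * z) - Complex.exp ((-t + Complex.I) * z))
      (Ioi 0) :=
  (integrableOn_exp_mul_complex_Ioi (by simpa using ht) 0).sub
    (integrableOn_exp_mul_complex_Ioi (by simpa using ht) 0)

lemma integral_exp_sub_exp_mul_I {t : ℝ} (ht : 0 < t) :
    ∫ z in Ioi (0:ℝ), (Complex.exp (↑(-t) * z) - Complex.exp ((-t + Complex.I) * z))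
      = 1 / t - 1 / (t - Complex.I) := by
  rw [integral_sub (integrableOn_exp_mul_complex_Ioi (by simpa using ht) 0)
    (integrableOn_exp_mul_complex_Ioi (by simpa using ht) 0),
    integral_exp_mul_complex_Ioi (by simpa using ht), integral_exp_mul_complex_Ioi (by simpa using ht)]
  simp only [Complex.ofReal_zero, mul_zero, Complex.exp_zero]
  rw [show -(t : ℂ) + Complex.I = -(t - Complex.I) by ring]
  push_cast
  rw [neg_div_neg_eq, neg_div_neg_eq]

lemma integrableOn_exp_neg_mul_mul_one_sub_cos {t : ℝ} (ht : 0 < t) :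
    IntegrableOn (fun z => exp (-(t * z)) * (1 - cos z)) (Ioi 0) := by
  have h := (integrableOn_exp_sub_exp_mul_I ht).re
  simp only [RCLike.re_to_complex, re_exp_sub_exp_mul_I] at h
  exact h

lemma integral_exp_neg_mul_mul_one_sub_cos {t : ℝ} (ht : 0 < t) :
    ∫ z in Ioi (0:ℝ), exp (-(t * z)) * (1 - cos z) = 1 / t - t / (1 + t ^ 2) := by
  have h := integral_re (integrableOn_exp_sub_exp_mul_I ht)
  simp only [RCLike.re_to_complex, re_exp_sub_exp_mul_I] at h
  rw [h, integral_exp_sub_exp_mul_I ht]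
  have : t ^ 2 + 1 ≠ 0 := by positivity
  simp [Complex.normSq_apply]
  field_simp
  ring

noncomputable def cosLaplaceKernel (t z : ℝ) : ℝ := t * exp (-(t * z)) * (1 - cos z)

lemma cosLaplaceKernel_nonneg {t : ℝ} (ht : 0 ≤ t) (z : ℝ) : 0 ≤ cosLaplaceKernel t z :=
  mul_nonneg (mul_nonneg ht (exp_pos _).le) (sub_nonneg.mpr (cos_le_one z))

lemma continuous_cosLaplaceKernel : Continuous (Function.uncurry cosLaplaceKernel) := by
  unfold cosLaplaceKernel
  fun_prop

lemma integral_cosLaplaceKernel_left {z : ℝ} (hz : 0 < z) :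
    ∫ t in Ioi (0:ℝ), cosLaplaceKernel t z = (1 - cos z) / z ^ 2 := by
  simp_rw [cosLaplaceKernel, mul_comm _ z]
  rw [integral_mul_const, integral_mul_exp_neg_mul_Ioi hz, one_div_mul_eq_div]

lemma integrableOn_cosLaplaceKernel_right {t : ℝ} (ht : 0 < t) :
    IntegrableOn (cosLaplaceKernel t) (Ioi 0) := by
  have h := (integrableOn_exp_neg_mul_mul_one_sub_cos ht).const_mul t
  simp only [← mul_assoc] at h
  exact h

lemma integral_cosLaplaceKernel_right {t : ℝ} (ht : 0 < t) :
    ∫ z in Ioi (0:ℝ), cosLaplaceKernel t z = (1 + t ^ 2)⁻¹ := by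
  simp_rw [cosLaplaceKernel, mul_assoc]
  rw [integral_const_mul, integral_exp_neg_mul_mul_one_sub_cos ht]
  field_simp
  ring

lemma integrable_cosLaplaceKernel :
    Integrable (Function.uncurry cosLaplaceKernel)
      ((volume.restrict (Ioi 0)).prod (volume.restrict (Ioi 0))) := by
  refine (integrable_prod_iff continuous_cosLaplaceKernel.aestronglyMeasurable).mpr ⟨?_, ?_⟩
  · filter_upwards [ae_restrict_mem measurableSet_Ioi] with t ht
    exact integrableOn_cosLaplaceKernel_right ht
  · refine (integrable_inv_one_add_sq.integrableOn (s := Ioi 0)).congr ?_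
    filter_upwards [ae_restrict_mem measurableSet_Ioi] with t (ht : 0 < t)
    simp only [Function.uncurry_apply_pair,
      Real.norm_of_nonneg (cosLaplaceKernel_nonneg ht.le _), integral_cosLaplaceKernel_right ht]

theorem stmt_14 :
    (∫ z in Ioi (0:ℝ), (1 - Real.cos z) / z ^ 2) = π / 2 := by
  calc ∫ z in Ioi (0:ℝ), (1 - cos z) / z ^ 2
      = ∫ z in Ioi (0:ℝ), ∫ t in Ioi (0:ℝ), cosLaplaceKernel t z :=
        setIntegral_congr_fun measurableSet_Ioi fun z hz => (integral_cosLaplaceKernel_left hz).symm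
    _ = ∫ t in Ioi (0:ℝ), ∫ z in Ioi (0:ℝ), cosLaplaceKernel t z :=
        (integral_integral_swap integrable_cosLaplaceKernel).symm
    _ = ∫ t in Ioi (0:ℝ), (1 + t ^ 2)⁻¹ :=
        setIntegral_congr_fun measurableSet_Ioi fun t ht => integral_cosLaplaceKernel_right ht
    _ = π / 2 := by rw [integral_Ioi_inv_one_add_sq, arctan_zero, sub_zero]
end

section
/- For α ∈ (0,1), the improper integral ∫₀^∞ (1 − cos z)/z^{1+α} dz equals −Γ(−α)·cos(απ/2), where Γ(−α) is understood via the functional equation Γ(−α) = Γ(2−α)/((−α)(1−α)). -/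
/-!
Write `z ^ (-(1 + α)) = Γ(1 + α)⁻¹ ∫₀^∞ t ^ α e^{-z t} dt` and exchange the two integrals (the
integrand is nonnegative). The Laplace transform of `1 - cos` is `1 / (t (1 + t²))`, which leaves
`Γ(1 + α)⁻¹ ∫₀^∞ t ^ (α - 1) / (1 + t²) dt`. The same trick, with
`1 / (1 + t ^ p) = ∫₀^∞ e^{-(1 + t ^ p) y} dy`, evaluates this last integral as
`Γ(α/2) Γ(1 - α/2) / 2 = π / (2 sin (πα/2))`, and the reflection formula for `Γ` turns the result
into `Γ(1 - α) cos (πα/2) / α`, which is the right-hand side.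
-/

open MeasureTheory Set Real Filter Topology

section Tonelli

variable {X Y : Type*} [MeasurableSpace X] [MeasurableSpace Y] {μ : Measure X} {ν : Measure Y}

theorem integral_integral_eq_toReal_lintegral_lintegral [SFinite ν] {f : X → Y → ℝ}
    (hf : AEStronglyMeasurable (Function.uncurry f) (μ.prod ν))
    (hf0 : ∀ᵐ x ∂μ, 0 ≤ᵐ[ν] f x) (hfi : ∀ᵐ x ∂μ, Integrable (f x) ν) :
    ∫ x, ∫ y, f x y ∂ν ∂μ = (∫⁻ x, ∫⁻ y, ENNReal.ofReal (f x y) ∂ν ∂μ).toReal := by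
  rw [integral_eq_lintegral_of_nonneg_ae (hf0.mono fun x hx => integral_nonneg_of_ae hx)
    hf.integral_prod_right']
  congr 1
  refine lintegral_congr_ae ?_
  filter_upwards [hf0, hfi] with x h0 hi
  exact ofReal_integral_eq_lintegral_ofReal hi h0

/-- Integrability on the product is not needed: both sides are `toReal` of the same, possibly
infinite, iterated lintegral. -/
theorem integral_integral_swap_of_nonneg [SFinite μ] [SFinite ν] {f : X → Y → ℝ}
    (hf : AEStronglyMeasurable (Function.uncurry f) (μ.prod ν))
    (hf0 : ∀ᵐ x ∂μ, 0 ≤ᵐ[ν] f x) (hf0' : ∀ᵐ y ∂ν, 0 ≤ᵐ[μ] (f · y))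
    (hfi : ∀ᵐ x ∂μ, Integrable (f x) ν) (hfi' : ∀ᵐ y ∂ν, Integrable (f · y) μ) :
    ∫ x, ∫ y, f x y ∂ν ∂μ = ∫ y, ∫ x, f x y ∂μ ∂ν := by
  rw [integral_integral_eq_toReal_lintegral_lintegral hf hf0 hfi,
    integral_integral_eq_toReal_lintegral_lintegral hf.prod_swap hf0' hfi',
    lintegral_lintegral_swap (f := fun x y => ENNReal.ofReal (f x y))
      (ENNReal.measurable_ofReal.comp_aemeasurable hf.aemeasurable)]

end Tonelli

theorem setIntegral_Ioi_swap_of_nonneg {f : ℝ → ℝ → ℝ} (hf : Measurable (Function.uncurry f))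
    (hf0 : ∀ x > 0, ∀ y > 0, 0 ≤ f x y) (hfi : ∀ x > 0, IntegrableOn (f x) (Ioi 0))
    (hfi' : ∀ y > 0, IntegrableOn (f · y) (Ioi 0)) :
    ∫ x in Ioi 0, ∫ y in Ioi 0, f x y = ∫ y in Ioi 0, ∫ x in Ioi 0, f x y := by
  have hae {p : ℝ → Prop} (h : ∀ x > 0, p x) : ∀ᵐ x ∂(volume.restrict (Ioi 0)), p x :=
    (ae_restrict_iff' measurableSet_Ioi).2 (ae_of_all _ h)
  exact integral_integral_swap_of_nonneg hf.aestronglyMeasurable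
    (hae fun x hx => hae fun y hy => hf0 x hx y hy)
    (hae fun y hy => hae fun x hx => hf0 x hx y hy) (hae hfi) (hae hfi')

theorem integral_one_sub_cos_mul_exp_neg_mul {t : ℝ} (ht : 0 < t) :
    ∫ z in Ioi 0, (1 - cos z) * exp (-(t * z)) = 1 / (t * (1 + t ^ 2)) := by
  set P : ℝ → ℝ := fun z => (t * cos z - sin z) / (1 + t ^ 2) - 1 / t
  have hderiv (z : ℝ) :
      HasDerivAt (fun z => exp (-(t * z)) * P z) ((1 - cos z) * exp (-(t * z))) z := by
    have hE : HasDerivAt (fun z => exp (-(t * z))) (-t * exp (-(t * z))) z := by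
      simpa [mul_comm] using ((hasDerivAt_id z).const_mul t).neg.exp
    have hP : HasDerivAt P ((t * -sin z - cos z) / (1 + t ^ 2)) z :=
      ((((hasDerivAt_cos z).const_mul t).sub (hasDerivAt_sin z)).div_const _).sub_const _
    refine (hE.mul hP).congr_deriv ?_
    simp only [P]
    field_simp
    ring
  have hP_bdd : IsBoundedUnder (· ≤ ·) atTop (norm ∘ P) := by
    refine isBoundedUnder_of ⟨t + 1 + 1 / t, fun z => ?_⟩
    have h1 : |t * cos z - sin z| ≤ t + 1 := by
      calc |t * cos z - sin z| ≤ |t * cos z| + |sin z| := abs_sub _ _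
        _ ≤ t * 1 + 1 := by
          rw [abs_mul, abs_of_pos ht]
          gcongr
          exacts [abs_cos_le_one z, abs_sin_le_one z]
        _ = t + 1 := by ring
    have h2 : |(t * cos z - sin z) / (1 + t ^ 2)| ≤ t + 1 := by
      rw [abs_div, abs_of_pos (by positivity : (0 : ℝ) < 1 + t ^ 2)]
      exact (div_le_self (abs_nonneg _) (by nlinarith)).trans h1
    calc ‖P z‖ ≤ |(t * cos z - sin z) / (1 + t ^ 2)| + |1 / t| := abs_sub _ _
      _ ≤ t + 1 + 1 / t := by rw [abs_of_pos (by positivity : 0 < 1 / t)]; linarith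
  have hlim : Tendsto (fun z => exp (-(t * z)) * P z) atTop (𝓝 0) :=
    (tendsto_exp_atBot.comp (tendsto_neg_atTop_atBot.comp (tendsto_id.const_mul_atTop ht))
      ).zero_mul_isBoundedUnder_le hP_bdd
  have hnonneg (z : ℝ) : 0 ≤ (1 - cos z) * exp (-(t * z)) :=
    mul_nonneg (sub_nonneg.2 (cos_le_one z)) (exp_pos _).le
  rw [integral_Ioi_of_hasDerivAt_of_nonneg' (fun z _ => hderiv z) (fun z _ => hnonneg z) hlim]
  simp only [P, mul_zero, neg_zero, exp_zero, cos_zero, sin_zero]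
  field_simp
  ring

theorem one_div_rpow_eq_inv_Gamma_mul_integral {z a : ℝ} (hz : 0 < z) (ha : 0 < a) :
    1 / z ^ a = (Gamma a)⁻¹ * ∫ t in Ioi 0, t ^ (a - 1) * exp (-(z * t)) := by
  rw [integral_rpow_mul_exp_neg_mul_Ioi ha hz, div_rpow zero_le_one hz.le, one_rpow]
  field_simp [(Gamma_pos_of_pos ha).ne']

theorem integral_rpow_div_one_add_rpow {p s : ℝ} (hp : 0 < p) (hs : 0 < s) (hsp : s < p) :
    ∫ t in Ioi 0, t ^ (s - 1) / (1 + t ^ p) = π / (p * sin (π * s / p)) := by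
  set f : ℝ → ℝ → ℝ := fun t y => t ^ (s - 1) * exp (-((1 + t ^ p) * y))
  have hsp' : 0 < 1 - s / p := by rw [sub_pos, div_lt_one hp]; exact hsp
  have inner_y (t : ℝ) (ht : 0 < t) : ∫ y in Ioi 0, f t y = t ^ (s - 1) / (1 + t ^ p) := by
    have h1 : 0 < 1 + t ^ p := by positivity
    simp only [f, ← neg_mul]
    rw [integral_const_mul, integral_exp_mul_Ioi (by linarith) 0, mul_zero, exp_zero]
    field_simp
  have inner_t (y : ℝ) (hy : 0 < y) :
      ∫ t in Ioi 0, f t y = Gamma (s / p) / p * (exp (-y) * y ^ ((1 - s / p) - 1)) := by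
    have hf : ∀ t, f t y = exp (-y) * (t ^ (s - 1) * exp (-y * t ^ p)) := fun t => by
      simp only [f]; rw [mul_left_comm, ← exp_add]; ring_nf
    simp_rw [hf]
    rw [integral_const_mul, integral_rpow_mul_exp_neg_mul_rpow hp (by linarith) hy]
    simp only [sub_add_cancel, sub_sub_cancel_left, neg_div]
    ring
  have hfi (t : ℝ) (ht : 0 < t) : IntegrableOn (f t) (Ioi 0) :=
    Integrable.of_integral_ne_zero (by rw [inner_y t ht]; positivity)
  have hfi' (y : ℝ) (hy : 0 < y) : IntegrableOn (f · y) (Ioi 0) := by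
    have hΓ := Gamma_pos_of_pos (div_pos hs hp)
    exact Integrable.of_integral_ne_zero (by rw [inner_t y hy]; positivity)
  have hf0 (t : ℝ) (ht : 0 < t) (y : ℝ) (_ : 0 < y) : 0 ≤ f t y := by positivity
  calc ∫ t in Ioi 0, t ^ (s - 1) / (1 + t ^ p)
      = ∫ t in Ioi 0, ∫ y in Ioi 0, f t y :=
        setIntegral_congr_fun measurableSet_Ioi fun t ht => (inner_y t ht).symm
    _ = ∫ y in Ioi 0, ∫ t in Ioi 0, f t y :=
        setIntegral_Ioi_swap_of_nonneg (by fun_prop) hf0 hfi hfi'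
    _ = Gamma (s / p) / p * Gamma (1 - s / p) := by
        rw [setIntegral_congr_fun measurableSet_Ioi inner_t, integral_const_mul,
          Gamma_eq_integral hsp']
    _ = π / (p * sin (π * s / p)) := by
        rw [mul_comm, mul_div_assoc', mul_comm (Gamma _), Gamma_mul_Gamma_one_sub, mul_div_assoc]
        field_simp

theorem integral_one_sub_cos_div_rpow_eq_inv_Gamma_mul {α : ℝ} (hα : -1 < α) :
    ∫ z in Ioi 0, (1 - cos z) / z ^ (1 + α) =
      (Gamma (1 + α))⁻¹ * ∫ t in Ioi 0, t ^ (α - 1) / (1 + t ^ (2 : ℝ)) := by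
  set k : ℝ → ℝ → ℝ := fun z t => (1 - cos z) * (t ^ α * exp (-(z * t)))
  have hα' : 0 < 1 + α := by linarith
  have inner_t (z : ℝ) (hz : 0 < z) :
      (1 - cos z) / z ^ (1 + α) = (Gamma (1 + α))⁻¹ * ∫ t in Ioi 0, k z t := by
    rw [integral_const_mul, div_eq_mul_one_div, one_div_rpow_eq_inv_Gamma_mul_integral hz hα',
      add_sub_cancel_left]
    ring
  have inner_z (t : ℝ) (ht : 0 < t) :
      ∫ z in Ioi 0, k z t = t ^ (α - 1) / (1 + t ^ (2 : ℝ)) := by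
    have hk : ∀ z, k z t = t ^ α * ((1 - cos z) * exp (-(t * z))) := fun z => by
      simp only [k]; ring_nf
    simp_rw [hk]
    rw [integral_const_mul, integral_one_sub_cos_mul_exp_neg_mul ht, rpow_sub_one ht.ne',
      rpow_two]
    field_simp
  have hfi (z : ℝ) (hz : 0 < z) : IntegrableOn (k z) (Ioi 0) := by
    have h := integral_rpow_mul_exp_neg_mul_Ioi hα' hz
    have hΓ := Gamma_pos_of_pos hα'
    rw [add_sub_cancel_left] at h
    exact (Integrable.of_integral_ne_zero (by rw [h]; positivity)).const_mul _
  have hfi' (t : ℝ) (ht : 0 < t) : IntegrableOn (k · t) (Ioi 0) :=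
    Integrable.of_integral_ne_zero (by rw [inner_z t ht]; positivity)
  have hf0 (z : ℝ) (_ : 0 < z) (t : ℝ) (ht : 0 < t) : 0 ≤ k z t :=
    mul_nonneg (sub_nonneg.2 (cos_le_one z)) (by positivity)
  calc ∫ z in Ioi 0, (1 - cos z) / z ^ (1 + α)
      = (Gamma (1 + α))⁻¹ * ∫ z in Ioi 0, ∫ t in Ioi 0, k z t := by
        rw [← integral_const_mul]
        exact setIntegral_congr_fun measurableSet_Ioi inner_t
    _ = (Gamma (1 + α))⁻¹ * ∫ t in Ioi 0, ∫ z in Ioi 0, k z t := by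
        rw [setIntegral_Ioi_swap_of_nonneg (by fun_prop) hf0 hfi hfi']
    _ = (Gamma (1 + α))⁻¹ * ∫ t in Ioi 0, t ^ (α - 1) / (1 + t ^ (2 : ℝ)) := by
        rw [setIntegral_congr_fun measurableSet_Ioi inner_z]

theorem stmt_15 (α : ℝ) (hα : α ∈ Ioo (0:ℝ) 1) :
    (∫ z in Ioi (0:ℝ), (1 - Real.cos z) / z ^ (1 + α)) =
      -(Real.Gamma (2 - α) / ((-α) * (1 - α))) * Real.cos (α * π / 2) := by
  obtain ⟨h0, h1⟩ := hα
  rw [integral_one_sub_cos_div_rpow_eq_inv_Gamma_mul (by linarith),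
    integral_rpow_div_one_add_rpow two_pos h0 (by linarith)]
  have hsin : 0 < sin (π * α / 2) :=
    sin_pos_of_pos_of_lt_pi (by positivity) (by nlinarith [pi_pos])
  have hcos : 0 < cos (π * α / 2) :=
    cos_pos_of_mem_Ioo ⟨by nlinarith [pi_pos], by nlinarith [pi_pos]⟩
  have hreflect : Gamma α * Gamma (1 - α) * (2 * sin (π * α / 2) * cos (π * α / 2)) = π := by
    have hdouble : sin (π * α) = 2 * sin (π * α / 2) * cos (π * α / 2) := by
      rw [← sin_two_mul]; ring_nf
    rw [← hdouble, Gamma_mul_Gamma_one_sub, div_mul_cancel₀ _ (by rw [hdouble]; positivity)]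
  rw [add_comm, Gamma_add_one h0.ne', show 2 - α = (1 - α) + 1 by ring,
    Gamma_add_one (by linarith), show α * π / 2 = π * α / 2 by ring]
  have hΓ := Gamma_pos_of_pos h0
  have h1' : 1 - α ≠ 0 := by linarith
  generalize sin (π * α / 2) = S, cos (π * α / 2) = C at *
  field_simp
  linear_combination -hreflect
end

section
/- Let r̂ : (0,∞) → [0,∞) be bounded and satisfy |r̂(ω) − L| ≤ c ω^{γ₀} for all small ω, with L > 0 and γ₀ ∈ (0,2]. Define M(t) = 4 ∫₀^∞ (1 − cos(tω))/ω² · r̂(ω) dω. Then |M(t)/t − 2πL| = O(t^{-γ₀/2}) as t → ∞. -/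
open MeasureTheory Filter Set Real Asymptotics

/-!
Since `∫₀^∞ (1 - cos tω) / ω² dω = π t / 2` (for `t = 1` by Fubini applied to
`s e^{-sω} (1 - cos ω)`, whose `s`-integral is `(1 - cos ω)/ω²` and whose `ω`-integral is
`1/(1 + s²)`), the quantity to be estimated is
`4/t` times the kernel integral of `r - L`. Interpolating `1 - cos z ≤ min (z²/2) 2` gives
`1 - cos z ≤ 2 z^(1 - γ₀/2)`, so on `(0, ω₀)` the kernel times `c ω^γ₀` is at most
`2 c t^(1 - γ₀/2) ω^(γ₀/2 - 1)`, which is integrable at `0`; on `[ω₀, ∞)` the kernel is at most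
`2/ω²` and `r - L` is bounded. The kernel integral of `r - L` is therefore `O(t^(1 - γ₀/2))`.
-/

lemma exp_neg_mul_mul_cos_eq_re (s x : ℝ) :
    exp (-(s * x)) * cos x = (Complex.exp ((-s + Complex.I) * x)).re := by
  rw [Complex.exp_re]
  simp

lemma integrableOn_exp_neg_mul_mul_cos {s : ℝ} (hs : 0 < s) :
    IntegrableOn (fun x => exp (-(s * x)) * cos x) (Ioi 0) := by
  simp_rw [exp_neg_mul_mul_cos_eq_re]
  exact (integrableOn_exp_mul_complex_Ioi (a := -s + Complex.I) (by simpa using hs) 0).re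

lemma integral_exp_neg_mul_mul_cos {s : ℝ} (hs : 0 < s) :
    ∫ x in Ioi 0, exp (-(s * x)) * cos x = s / (s ^ 2 + 1) := by
  simp_rw [exp_neg_mul_mul_cos_eq_re, ← RCLike.re_to_complex]
  rw [integral_re (integrableOn_exp_mul_complex_Ioi (by simpa using hs) 0),
    integral_exp_mul_complex_Ioi (by simpa using hs)]
  simp [Complex.div_re, Complex.normSq]
  field_simp

lemma integral_exp_neg_mul_Ioi {s : ℝ} (hs : 0 < s) : ∫ x in Ioi 0, exp (-(s * x)) = 1 / s := by
  simp_rw [← neg_mul]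
  rw [integral_exp_mul_Ioi (by linarith)]
  simp

lemma integral_mul_exp_neg_mul_mul_one_sub_cos {s : ℝ} (hs : 0 < s) :
    ∫ x in Ioi 0, s * exp (-(s * x)) * (1 - cos x) = (1 + s ^ 2)⁻¹ := by
  have hexp : IntegrableOn (fun x => exp (-(s * x))) (Ioi 0) := by
    simpa only [neg_mul] using exp_neg_integrableOn_Ioi 0 hs
  simp_rw [mul_assoc, mul_one_sub]
  rw [integral_const_mul, integral_sub hexp (integrableOn_exp_neg_mul_mul_cos hs),
    integral_exp_neg_mul_Ioi hs, integral_exp_neg_mul_mul_cos hs]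
  field_simp
  ring

lemma integral_mul_exp_neg_mul_Ioi_s16 {x : ℝ} (hx : 0 < x) :
    ∫ s in Ioi 0, s * exp (-(s * x)) = (x ^ 2)⁻¹ := by
  simp_rw [mul_comm _ x]
  have h := integral_rpow_mul_exp_neg_mul_Ioi (a := 2) two_pos hx
  norm_num [Gamma_two] at h
  exact h

lemma integral_one_sub_cos_div_sq : ∫ x in Ioi 0, (1 - cos x) / x ^ 2 = π / 2 := by
  set f : ℝ → ℝ → ℝ := fun s x => s * exp (-(s * x)) * (1 - cos x)
  have hf_nonneg : ∀ s x : ℝ, 0 ≤ s → 0 ≤ f s x := fun s x hs =>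
    mul_nonneg (mul_nonneg hs (exp_pos _).le) (sub_nonneg.2 (cos_le_one x))
  have hf_meas : AEStronglyMeasurable (Function.uncurry f)
      ((volume.restrict (Ioi 0)).prod (volume.restrict (Ioi 0))) := by
    apply Continuous.aestronglyMeasurable
    fun_prop
  have hf_int : Integrable (Function.uncurry f)
      ((volume.restrict (Ioi 0)).prod (volume.restrict (Ioi 0))) := by
    refine (integrable_prod_iff hf_meas).2 ⟨?_, ?_⟩
    · filter_upwards [ae_restrict_mem measurableSet_Ioi] with s hs
      refine Integrable.of_integral_ne_zero ?_
      rw [Function.uncurry_def, integral_mul_exp_neg_mul_mul_one_sub_cos hs]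
      positivity
    · refine integrable_inv_one_add_sq.integrableOn.congr_fun (fun s hs => ?_) measurableSet_Ioi
      simp_rw [Function.uncurry_apply_pair, Real.norm_of_nonneg (hf_nonneg s _ (le_of_lt hs))]
      exact (integral_mul_exp_neg_mul_mul_one_sub_cos hs).symm
  calc ∫ x in Ioi 0, (1 - cos x) / x ^ 2
      = ∫ x in Ioi 0, ∫ s in Ioi 0, f s x := by
        refine setIntegral_congr_fun measurableSet_Ioi fun x hx => ?_
        simp only [f, integral_mul_const, integral_mul_exp_neg_mul_Ioi_s16 hx]
        ring
    _ = ∫ s in Ioi 0, ∫ x in Ioi 0, f s x := (integral_integral_swap hf_int).symm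
    _ = ∫ s in Ioi 0, (1 + s ^ 2)⁻¹ :=
        setIntegral_congr_fun measurableSet_Ioi fun s hs =>
          integral_mul_exp_neg_mul_mul_one_sub_cos hs
    _ = π / 2 := by simp [integral_Ioi_inv_one_add_sq]

lemma integral_one_sub_cos_mul_div_sq {t : ℝ} (ht : 0 < t) :
    ∫ ω in Ioi 0, (1 - cos (t * ω)) / ω ^ 2 = π / 2 * t := by
  have h := integral_comp_mul_left_Ioi (fun x => (1 - cos x) / x ^ 2) 0 ht
  rw [mul_zero, integral_one_sub_cos_div_sq, smul_eq_mul] at h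
  calc ∫ ω in Ioi 0, (1 - cos (t * ω)) / ω ^ 2
      = ∫ ω in Ioi 0, t ^ 2 * ((1 - cos (t * ω)) / (t * ω) ^ 2) := by
        refine setIntegral_congr_fun measurableSet_Ioi fun ω hω => ?_
        field_simp [hω.out.ne']
    _ = π / 2 * t := by
        rw [integral_const_mul, h]
        field_simp

lemma integrableOn_one_sub_cos_mul_div_sq {t : ℝ} (ht : 0 < t) :
    IntegrableOn (fun ω => (1 - cos (t * ω)) / ω ^ 2) (Ioi 0) := by
  refine Integrable.of_integral_ne_zero ?_
  rw [integral_one_sub_cos_mul_div_sq ht]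
  positivity

lemma one_sub_cos_le_two_mul_rpow {z p : ℝ} (hz : 0 < z) (hp : p ∈ Icc 0 2) :
    1 - cos z ≤ 2 * z ^ p := by
  rcases le_or_gt 1 z with h | h
  · linarith [neg_one_le_cos z, one_le_rpow h hp.1]
  · have hsq : z ^ (2 : ℝ) ≤ z ^ p := rpow_le_rpow_of_exponent_ge hz h.le hp.2
    rw [rpow_two] at hsq
    nlinarith [one_sub_sq_div_two_le_cos (x := z), sq_nonneg z]

section KernelEstimates

variable {g : ℝ → ℝ} {t c C γ ω₀ : ℝ}

lemma integrableOn_one_sub_cos_mul_div_sq_mul (ht : 0 < t)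
    (hg : AEStronglyMeasurable g (volume.restrict (Ioi 0))) (hC : ∀ ω ∈ Ioi 0, |g ω| ≤ C) :
    IntegrableOn (fun ω => (1 - cos (t * ω)) / ω ^ 2 * g ω) (Ioi 0) :=
  (integrableOn_one_sub_cos_mul_div_sq ht).mul_bdd hg <|
    (ae_restrict_iff' measurableSet_Ioi).2 (Eventually.of_forall hC)

lemma setIntegral_Ioo_one_sub_cos_mul_div_sq_mul_le (ht : 0 < t) (hγ : γ ∈ Ioc 0 2)
    (hnear : ∀ ω, 0 < ω → ω < ω₀ → |g ω| ≤ c * ω ^ γ) :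
    ∫ ω in Ioo 0 ω₀, (1 - cos (t * ω)) / ω ^ 2 * |g ω|
      ≤ 2 * c * t ^ (1 - γ / 2) * ∫ ω in Ioo 0 ω₀, ω ^ (γ / 2 - 1) := by
  rw [← integral_const_mul]
  refine integral_mono_of_nonneg ?_ ?_ ?_
  · filter_upwards with ω
    have := cos_le_one (t * ω)
    positivity
  · exact ((intervalIntegral.intervalIntegrable_rpow' (by linarith [hγ.1])).1.mono_set
      Ioo_subset_Ioc_self).const_mul _
  · filter_upwards [ae_restrict_mem measurableSet_Ioo] with ω ⟨hω, hωω₀⟩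
    have hkernel : (1 - cos (t * ω)) / ω ^ 2 ≤ 2 * t ^ (1 - γ / 2) * ω ^ (-1 - γ / 2) := by
      rw [div_le_iff₀ (by positivity), mul_assoc, ← rpow_two, ← rpow_add hω]
      calc 1 - cos (t * ω) ≤ 2 * (t * ω) ^ (1 - γ / 2) :=
            one_sub_cos_le_two_mul_rpow (by positivity) ⟨by linarith [hγ.2], by linarith [hγ.1]⟩
        _ = 2 * t ^ (1 - γ / 2) * ω ^ (-1 - γ / 2 + 2) := by
            rw [mul_rpow ht.le hω.le]
            ring_nf
    calc (1 - cos (t * ω)) / ω ^ 2 * |g ω|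
        ≤ 2 * t ^ (1 - γ / 2) * ω ^ (-1 - γ / 2) * (c * ω ^ γ) := by
          gcongr
          exact hnear ω hω hωω₀
      _ = 2 * c * t ^ (1 - γ / 2) * ω ^ (γ / 2 - 1) := by
          rw [show γ / 2 - 1 = (-1 - γ / 2) + γ by ring, rpow_add hω]
          ring

lemma setIntegral_Ici_one_sub_cos_mul_div_sq_mul_le (hω₀ : 0 < ω₀)
    (hfar : ∀ ω, ω₀ ≤ ω → |g ω| ≤ C) :
    ∫ ω in Ici ω₀, (1 - cos (t * ω)) / ω ^ 2 * |g ω| ≤ ∫ ω in Ici ω₀, 2 * C * ω ^ (-2 : ℝ) := by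
  refine integral_mono_of_nonneg ?_ ?_ ?_
  · filter_upwards with ω
    have := cos_le_one (t * ω)
    positivity
  · exact ((integrableOn_Ioi_rpow_of_lt (by norm_num) hω₀).congr_set_ae
      Ioi_ae_eq_Ici.symm).const_mul _
  · filter_upwards [ae_restrict_mem measurableSet_Ici] with ω hω
    have hω_pos : 0 < ω := hω₀.trans_le hω
    calc (1 - cos (t * ω)) / ω ^ 2 * |g ω| ≤ 2 / ω ^ 2 * C := by
          gcongr
          · linarith [neg_one_le_cos (t * ω)]
          · exact hfar ω hω
      _ = 2 * C * ω ^ (-2 : ℝ) := by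
          rw [rpow_neg hω_pos.le, rpow_two]
          ring

theorem isBigO_integral_one_sub_cos_mul_div_sq_mul
    (hg : AEStronglyMeasurable g (volume.restrict (Ioi 0))) (hC : ∀ ω ∈ Ioi 0, |g ω| ≤ C)
    (hγ : γ ∈ Ioc 0 2) (hω₀ : 0 < ω₀) (hnear : ∀ ω, 0 < ω → ω < ω₀ → |g ω| ≤ c * ω ^ γ) :
    (fun t => ∫ ω in Ioi 0, (1 - cos (t * ω)) / ω ^ 2 * g ω) =O[atTop]
      fun t => t ^ (1 - γ / 2) := by
  set K := ∫ ω in Ioo 0 ω₀, ω ^ (γ / 2 - 1)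
  set C₂ := ∫ ω in Ici ω₀, 2 * C * ω ^ (-2 : ℝ)
  refine IsBigO.of_bound (2 * c * K + |C₂|) ?_
  filter_upwards [eventually_ge_atTop 1] with t ht
  have ht_pos : 0 < t := one_pos.trans_le ht
  have hint := integrableOn_one_sub_cos_mul_div_sq_mul ht_pos hg.norm
    (C := C) fun ω hω => (abs_abs (g ω)).trans_le (hC ω hω)
  have htp : 1 ≤ t ^ (1 - γ / 2) := one_le_rpow ht (by linarith [hγ.2])
  calc ‖∫ ω in Ioi 0, (1 - cos (t * ω)) / ω ^ 2 * g ω‖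
      ≤ ∫ ω in Ioi 0, (1 - cos (t * ω)) / ω ^ 2 * |g ω| := by
        refine (norm_integral_le_integral_norm _).trans_eq (integral_congr_ae ?_)
        filter_upwards with ω
        rw [norm_mul, norm_of_nonneg (div_nonneg (sub_nonneg.2 (cos_le_one _)) (sq_nonneg _)),
          norm_eq_abs]
    _ = (∫ ω in Ioo 0 ω₀, (1 - cos (t * ω)) / ω ^ 2 * |g ω|)
          + ∫ ω in Ici ω₀, (1 - cos (t * ω)) / ω ^ 2 * |g ω| := by
        rw [← Ioo_union_Ici_eq_Ioi hω₀] at hint ⊢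
        exact setIntegral_union ((Iio_disjoint_Ici le_rfl).mono_left Ioo_subset_Iio_self)
          measurableSet_Ici (hint.mono_set subset_union_left) (hint.mono_set subset_union_right)
    _ ≤ 2 * c * t ^ (1 - γ / 2) * K + C₂ :=
        add_le_add (setIntegral_Ioo_one_sub_cos_mul_div_sq_mul_le ht_pos hγ hnear)
          (setIntegral_Ici_one_sub_cos_mul_div_sq_mul_le hω₀
            fun ω hω => hC ω (hω₀.trans_le hω))
    _ ≤ (2 * c * K + |C₂|) * ‖t ^ (1 - γ / 2)‖ := by
        rw [norm_of_nonneg (zero_le_one.trans htp)]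
        nlinarith [le_abs_self C₂, abs_nonneg C₂]

end KernelEstimates

theorem stmt_16_general (r : ℝ → ℝ) (L c γ₀ ω₀ : ℝ)
    (hγ₀ : γ₀ ∈ Ioc (0:ℝ) 2) (hω₀ : 0 < ω₀)
    (hmeas : Measurable r)
    (hnonneg : ∀ ω ∈ Ioi (0:ℝ), 0 ≤ r ω)
    (hbdd : ∃ B : ℝ, ∀ ω ∈ Ioi (0:ℝ), r ω ≤ B)
    (hrate : ∀ ω : ℝ, 0 < ω → ω < ω₀ → |r ω - L| ≤ c * ω ^ γ₀) :
    (fun t => (4 * ∫ ω in Ioi (0:ℝ), (1 - Real.cos (t * ω)) / ω ^ 2 * r ω) / t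
        - 2 * π * L) =O[atTop] fun t => t ^ (-(γ₀ / 2)) := by
  obtain ⟨B, hB⟩ := hbdd
  have hr_bdd : ∀ ω ∈ Ioi 0, |r ω| ≤ B := fun ω hω =>
    abs_le.2 ⟨by linarith [hnonneg ω hω, hB ω hω], hB ω hω⟩
  have hdev := isBigO_integral_one_sub_cos_mul_div_sq_mul (g := fun ω => r ω - L)
    (hmeas.sub measurable_const).aestronglyMeasurable
    (fun ω hω => (abs_sub _ _).trans (add_le_add (hr_bdd ω hω) le_rfl)) hγ₀ hω₀ hrate
  refine ((isBigO_refl (fun t : ℝ => t⁻¹) atTop).mul (hdev.const_mul_left 4)).congr' ?_ ?_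
  · filter_upwards [eventually_gt_atTop 0] with t ht
    simp_rw [mul_sub]
    rw [integral_sub
      (integrableOn_one_sub_cos_mul_div_sq_mul ht hmeas.aestronglyMeasurable hr_bdd)
      ((integrableOn_one_sub_cos_mul_div_sq ht).mul_const L), integral_mul_const,
      integral_one_sub_cos_mul_div_sq ht]
    field_simp
    ring
  · filter_upwards [eventually_gt_atTop 0] with t ht
    rw [← rpow_neg_one, ← rpow_add ht]
    ring_nf

theorem stmt_16 (r : ℝ → ℝ) (L c γ₀ ω₀ : ℝ)
    (hL : 0 < L) (hc : 0 < c) (hγ₀ : γ₀ ∈ Ioc (0:ℝ) 2) (hω₀ : 0 < ω₀)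
    (hmeas : Measurable r)
    (hnonneg : ∀ ω ∈ Ioi (0:ℝ), 0 ≤ r ω)
    (hbdd : ∃ B : ℝ, ∀ ω ∈ Ioi (0:ℝ), r ω ≤ B)
    (hrate : ∀ ω : ℝ, 0 < ω → ω < ω₀ → |r ω - L| ≤ c * ω ^ γ₀) :
    (fun t => (4 * ∫ ω in Ioi (0:ℝ), (1 - Real.cos (t * ω)) / ω ^ 2 * r ω) / t
        - 2 * π * L) =O[atTop] fun t => t ^ (-(γ₀ / 2)) :=
  stmt_16_general r L c γ₀ ω₀ hγ₀ hω₀ hmeas hnonneg hbdd hrate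
end
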